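/- arXiv:2205.08826 — 6 statements merged into one kernel-verified Lean document; each statement's English description precedes it below -/
import Mathlib

section
/- If Y is a vector space, g : Y → {-∞} ∪ ℝ is concave, s : Y → ℝ ∪ {+∞} is convex, and there exists y_s ∈ dom(g) with s(y_s) < 0, then sup{ g(y) : y ∈ Y, s(y) ≤ 0 } = sup{ g(y) : y ∈ Y, s(y) < 0 }. -/
/-!
Take `y` with `s y ≤ 0` and the Slater point `y₀`. For `t ∈ (0, 1]` the point
`z = t • y₀ + (1 - t) • y` is strictly feasible, since convexity bounds `s z` by
`t s(y₀) + (1 - t) s(y) < 0`. For reals `a < g y₀` and `b < g y`, concavity gives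
`t a + (1 - t) b ≤ g z`, so `t a + (1 - t) b` lies below the strict supremum; letting `t → 0⁺`
and then `b ↑ g y` shows `g y` does too. Passing through real lower bounds `a`, `b` makes the
argument insensitive to infinite values of `g` and `s`.
-/

open Set Filter Topology

namespace EReal

lemma coe_mul_add_coe_sub_mul_neg {t : ℝ} (ht : t ∈ Ioc (0 : ℝ) 1) {x w : EReal}
    (hx : x < 0) (hw : w ≤ 0) : (t : EReal) * x + ((1 - t : ℝ) : EReal) * w < 0 := by
  have htx : (t : EReal) * x < 0 := mul_neg_iff.2 (.inl ⟨by exact_mod_cast ht.1, hx⟩)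
  have hw' : ((1 - t : ℝ) : EReal) * w ≤ 0 :=
    mul_nonpos_of_nonneg_of_nonpos (by exact_mod_cast _root_.sub_nonneg.2 ht.2) hw
  exact (add_le_of_nonpos_right hw').trans_lt htx

lemma coe_mul_add_coe_sub_mul_le {t : ℝ} (ht : t ∈ Icc (0 : ℝ) 1) {a b : ℝ} {u v : EReal}
    (ha : (a : EReal) ≤ u) (hb : (b : EReal) ≤ v) :
    ((t * a + (1 - t) * b : ℝ) : EReal) ≤ (t : EReal) * u + ((1 - t : ℝ) : EReal) * v := by
  push_cast
  gcongr
  · exact_mod_cast ht.1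
  · exact_mod_cast _root_.sub_nonneg.2 ht.2

lemma coe_le_of_forall_coe_mul_add_coe_sub_mul_le {a b : ℝ} {S : EReal}
    (h : ∀ t ∈ Ioc (0 : ℝ) 1, ((t * a + (1 - t) * b : ℝ) : EReal) ≤ S) : (b : EReal) ≤ S := by
  have : (𝓝[Ioc (0 : ℝ) 1] 0).NeBot := left_nhdsWithin_Ioc_neBot one_pos
  have hlim : Tendsto (fun t : ℝ => ((t * a + (1 - t) * b : ℝ) : EReal))
      (𝓝[Ioc (0 : ℝ) 1] 0) (𝓝 (b : EReal)) := by
    refine (continuous_coe_real_ereal.tendsto b).comp (Tendsto.mono_left ?_ nhdsWithin_le_nhds)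
    have hcont : Continuous fun t : ℝ => t * a + (1 - t) * b := by fun_prop
    simpa using hcont.tendsto 0
  exact le_of_tendsto hlim (eventually_of_mem self_mem_nhdsWithin h)

end EReal

section Slater

variable {Y : Type*} [AddCommGroup Y] [Module ℝ Y] {g s : Y → EReal}

theorem le_sSup_of_slater
    (hg_concave : ∀ x y : Y, ∀ t : ℝ, t ∈ Icc (0:ℝ) 1 →
      (t : EReal) * g x + ((1 - t : ℝ) : EReal) * g y ≤ g (t • x + (1 - t) • y))
    (hs_convex : ∀ x y : Y, ∀ t : ℝ, t ∈ Icc (0:ℝ) 1 →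
      s (t • x + (1 - t) • y) ≤ (t : EReal) * s x + ((1 - t : ℝ) : EReal) * s y)
    {y₀ : Y} (hgy₀ : g y₀ ≠ ⊥) (hsy₀ : s y₀ < 0) {y : Y} (hsy : s y ≤ 0) :
    g y ≤ sSup {r : EReal | ∃ y : Y, s y < 0 ∧ r = g y} := by
  obtain ⟨a, -, ha⟩ := EReal.exists_between_coe_real (bot_lt_iff_ne_bot.2 hgy₀)
  refine EReal.ge_of_forall_gt_iff_ge.1 fun b hb => ?_
  refine EReal.coe_le_of_forall_coe_mul_add_coe_sub_mul_le (a := a) fun t ht => ?_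
  have ht' : t ∈ Icc (0 : ℝ) 1 := Ioc_subset_Icc_self ht
  have hsz : s (t • y₀ + (1 - t) • y) < 0 :=
    (hs_convex y₀ y t ht').trans_lt (EReal.coe_mul_add_coe_sub_mul_neg ht hsy₀ hsy)
  calc ((t * a + (1 - t) * b : ℝ) : EReal)
      ≤ (t : EReal) * g y₀ + ((1 - t : ℝ) : EReal) * g y :=
        EReal.coe_mul_add_coe_sub_mul_le ht' ha.le hb.le
    _ ≤ g (t • y₀ + (1 - t) • y) := hg_concave y₀ y t ht'
    _ ≤ sSup {r : EReal | ∃ y : Y, s y < 0 ∧ r = g y} := le_sSup ⟨_, hsz, rfl⟩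

end Slater

theorem stmt_0_general {Y : Type*} [AddCommGroup Y] [Module ℝ Y]
    (g : Y → EReal) (s : Y → EReal)
    (hg_concave : ∀ x y : Y, ∀ t : ℝ, t ∈ Set.Icc (0:ℝ) 1 →
      (t : EReal) * g x + ((1 - t : ℝ) : EReal) * g y ≤ g (t • x + (1 - t) • y))
    (hs_convex : ∀ x y : Y, ∀ t : ℝ, t ∈ Set.Icc (0:ℝ) 1 →
      s (t • x + (1 - t) • y) ≤ (t : EReal) * s x + ((1 - t : ℝ) : EReal) * s y)
    (hslater : ∃ y : Y, g y ≠ ⊥ ∧ s y < 0) :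
    sSup {r : EReal | ∃ y : Y, s y ≤ 0 ∧ r = g y} =
      sSup {r : EReal | ∃ y : Y, s y < 0 ∧ r = g y} := by
  obtain ⟨y₀, hgy₀, hsy₀⟩ := hslater
  refine le_antisymm (sSup_le ?_) (sSup_le_sSup fun r ⟨y, hsy, hr⟩ => ⟨y, hsy.le, hr⟩)
  rintro r ⟨y, hsy, rfl⟩
  exact le_sSup_of_slater hg_concave hs_convex hgy₀ hsy₀ hsy

/-- Slater-type lemma: for a concave objective `g` (valued in `ℝ ∪ {-∞}`) and a convex
constraint `s` (valued in `ℝ ∪ {+∞}`) admitting a point of the domain of `g` where `s < 0`,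
the supremum over the non-strict constraint set equals the supremum over the strict one. -/
theorem stmt_0 {Y : Type*} [AddCommGroup Y] [Module ℝ Y]
    (g : Y → EReal) (s : Y → EReal)
    (hg_ne_top : ∀ y, g y ≠ ⊤)
    (hs_ne_bot : ∀ y, s y ≠ ⊥)
    (hg_concave : ∀ x y : Y, ∀ t : ℝ, t ∈ Set.Icc (0:ℝ) 1 →
      (t : EReal) * g x + ((1 - t : ℝ) : EReal) * g y ≤ g (t • x + (1 - t) • y))
    (hs_convex : ∀ x y : Y, ∀ t : ℝ, t ∈ Set.Icc (0:ℝ) 1 →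
      s (t • x + (1 - t) • y) ≤ (t : EReal) * s x + ((1 - t : ℝ) : EReal) * s y)
    (hslater : ∃ y : Y, g y ≠ ⊥ ∧ s y < 0) :
    sSup {r : EReal | ∃ y : Y, s y ≤ 0 ∧ r = g y} =
      sSup {r : EReal | ∃ y : Y, s y < 0 ∧ r = g y} :=
  stmt_0_general g s hg_concave hs_convex hslater
end

section
/- Let S ⊆ ℝ^d be a compact convex set with nonempty interior. Then the constant V := inf over x ∈ S and 0 < Δ ≤ d of vol(S ∩ B(x,Δ)) / Δ^d is strictly positive; in fact V ≥ vol(S) / (max(d, diam(S)))^d. -/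
open MeasureTheory Metric Module AffineMap

/-!
Shrinking `S` towards one of its points `x` by the factor `t = Δ / M`, where `M ≥ diam S`,
keeps it inside `S` by convexity and inside `B(x, Δ)` because distances to `x` shrink by `t`.
The shrunken copy has volume `t ^ d · vol S`, so `vol (S ∩ B(x, Δ)) / Δ ^ d ≥ vol S / M ^ d`.
-/

section Homothety

variable {E : Type*} [NormedAddCommGroup E] [NormedSpace ℝ E] {S : Set E} {x : E} {t : ℝ}

theorem Convex.image_homothety_subset_inter_closedBall (hS : Convex ℝ S)
    (hb : Bornology.IsBounded S) (hx : x ∈ S) (ht₀ : 0 ≤ t) (ht₁ : t ≤ 1) :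
    homothety x t '' S ⊆ S ∩ closedBall x (t * diam S) := by
  rintro _ ⟨y, hy, rfl⟩
  refine ⟨homothety_eq_lineMap x t y ▸ hS.lineMap_mem hx hy ⟨ht₀, ht₁⟩, ?_⟩
  rw [mem_closedBall, dist_homothety_center, Real.norm_of_nonneg ht₀, dist_comm]
  exact mul_le_mul_of_nonneg_left (dist_le_diam_of_mem hb hy hx) ht₀

variable [MeasurableSpace E] [BorelSpace E] [FiniteDimensional ℝ E]
  (μ : Measure E) [μ.IsAddHaarMeasure]

theorem Convex.ofReal_pow_mul_addHaar_le_inter_closedBall (hS : Convex ℝ S)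
    (hb : Bornology.IsBounded S) (hx : x ∈ S) (ht₀ : 0 ≤ t) (ht₁ : t ≤ 1) :
    ENNReal.ofReal (t ^ finrank ℝ E) * μ S ≤ μ (S ∩ closedBall x (t * diam S)) := by
  calc ENNReal.ofReal (t ^ finrank ℝ E) * μ S = μ (homothety x t '' S) := by
        rw [Measure.addHaar_image_homothety, abs_of_nonneg (pow_nonneg ht₀ _)]
    _ ≤ _ := measure_mono (hS.image_homothety_subset_inter_closedBall hb hx ht₀ ht₁)

theorem IsCompact.measureReal_div_pow_le_inter_closedBall (hSc : IsCompact S)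
    (hS : Convex ℝ S) (hx : x ∈ S) {Δ M : ℝ} (hΔ : 0 < Δ) (hΔM : Δ ≤ M) (hM : diam S ≤ M) :
    μ.real S / M ^ finrank ℝ E ≤ μ.real (S ∩ closedBall x Δ) / Δ ^ finrank ℝ E := by
  have hM₀ : 0 < M := hΔ.trans_le hΔM
  set t := Δ / M
  have ht₀ : 0 ≤ t := by positivity
  have hball : t * diam S ≤ Δ :=
    (mul_le_mul_of_nonneg_left hM ht₀).trans_eq (div_mul_cancel₀ Δ hM₀.ne')
  have hmeas : ENNReal.ofReal (t ^ finrank ℝ E) * μ S ≤ μ (S ∩ closedBall x Δ) :=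
    (hS.ofReal_pow_mul_addHaar_le_inter_closedBall μ hSc.isBounded hx ht₀
      ((div_le_one hM₀).2 hΔM)).trans (measure_mono (Set.inter_subset_inter_right _
        (closedBall_subset_closedBall hball)))
  have hreal : t ^ finrank ℝ E * μ.real S ≤ μ.real (S ∩ closedBall x Δ) := by
    have := ENNReal.toReal_mono
      ((measure_mono Set.inter_subset_left).trans_lt hSc.measure_lt_top).ne hmeas
    rwa [ENNReal.toReal_mul, ENNReal.toReal_ofReal (by positivity)] at this
  rw [div_le_div_iff₀ (by positivity) (by positivity)]
  calc μ.real S * Δ ^ finrank ℝ E = t ^ finrank ℝ E * μ.real S * M ^ finrank ℝ E := by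
        rw [div_pow]; field_simp
    _ ≤ μ.real (S ∩ closedBall x Δ) * M ^ finrank ℝ E := by gcongr

end Homothety

/-- For a compact convex set `S ⊆ ℝ^d` with nonempty interior, the constant
`V = inf_{x ∈ S, 0 < Δ ≤ d} vol(S ∩ B(x,Δ))/Δ^d` is positive; in fact it is at least
`vol(S) / (max d (diam S))^d`. -/
theorem stmt_1 {d : ℕ} (hd : 0 < d) (S : Set (EuclideanSpace ℝ (Fin d)))
    (hScomp : IsCompact S) (hSconv : Convex ℝ S) (hSint : (interior S).Nonempty) :
    0 < sInf {r : ℝ | ∃ x ∈ S, ∃ Δ : ℝ, 0 < Δ ∧ Δ ≤ d ∧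
        r = (volume (S ∩ Metric.closedBall x Δ)).toReal / Δ ^ d} ∧
    (volume S).toReal / max (d : ℝ) (Metric.diam S) ^ d ≤
      sInf {r : ℝ | ∃ x ∈ S, ∃ Δ : ℝ, 0 < Δ ∧ Δ ≤ d ∧
        r = (volume (S ∩ Metric.closedBall x Δ)).toReal / Δ ^ d} := by
  have hd' : (0 : ℝ) < d := Nat.cast_pos.2 hd
  have hvol : 0 < (volume S).toReal := ENNReal.toReal_pos
    (Measure.measure_pos_of_nonempty_interior _ hSint).ne' hScomp.measure_lt_top.ne
  refine (fun hbound => ⟨(div_pos hvol (pow_pos (hd'.trans_le (le_max_left _ _)) d)).trans_le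
    hbound, hbound⟩) (le_csInf ?_ ?_)
  · obtain ⟨x, hx⟩ := hSint
    exact ⟨_, x, interior_subset hx, d, hd', le_rfl, rfl⟩
  · rintro _ ⟨x, hx, Δ, hΔ, hΔd, rfl⟩
    simpa only [finrank_euclideanSpace_fin, measureReal_def] using
      hScomp.measureReal_div_pow_le_inter_closedBall volume hSconv hx hΔ
        (hΔd.trans (le_max_left _ _)) (le_max_right _ _)
end

section
/- Let S ⊆ ℝ^d be compact, P a Borel probability measure on S, and π₀ a Borel probability measure on S × S with first marginal P. Let F : S × S → ℝ be continuous and ε > 0. Then the infimum over continuous functions g : S → ℝ of E_{x∼P}[g(x)] + ε · E_{(x,y)∼π₀}[ exp((F(x,y) − g(x))/ε) − 1 ] is attained at g*(x) := ε log( ∫_S exp(F(x,y)/ε) π₀(dy|x) ), and the optimal value equals ε · E_{x∼P}[ log( E_{y∼π₀(·|x)} exp(F(x,y)/ε) ) ]. -/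
open MeasureTheory Filter

/-- The regularized dual functional
`J(g) = E_P[g] + ε E_{π₀}[exp((F − g ∘ fst)/ε) − 1]`. -/
noncomputable def entFunctional {d : ℕ}
    (P : Measure (EuclideanSpace ℝ (Fin d)))
    (π₀ : Measure (EuclideanSpace ℝ (Fin d) × EuclideanSpace ℝ (Fin d)))
    (F : EuclideanSpace ℝ (Fin d) × EuclideanSpace ℝ (Fin d) → ℝ) (ε : ℝ)
    (g : EuclideanSpace ℝ (Fin d) → ℝ) : ℝ :=
  (∫ x, g x ∂P) + ε * ∫ z, (Real.exp ((F z - g z.1) / ε) - 1) ∂π₀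

/-- The explicit log-sum-exp minimizer `g*(x) = ε log ∫ exp(F(x,y)/ε) π₀(dy|x)`. -/
noncomputable def entMinimizer {d : ℕ}
    (π₀ : Measure (EuclideanSpace ℝ (Fin d) × EuclideanSpace ℝ (Fin d)))
    [IsFiniteMeasure π₀]
    (F : EuclideanSpace ℝ (Fin d) × EuclideanSpace ℝ (Fin d) → ℝ) (ε : ℝ)
    (x : EuclideanSpace ℝ (Fin d)) : ℝ :=
  ε * Real.log (∫ y, Real.exp (F (x, y) / ε) ∂(π₀.condKernel x))


/-!
Disintegrate `π₀ = P ⊗ π₀(·|x)` and integrate out `y` first: since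
`∫ exp ((F(x,y) - g(x))/ε) π₀(dy|x) = exp ((g*(x) - g(x))/ε)`, the functional becomes
`J(g) = E_P[g + ε (exp ((g* - g)/ε) - 1)]`, and `J(g*) = E_P[g*]`.
The pointwise inequality `t ≤ ε (exp (t/ε) - 1)` gives `J(g) ≥ J(g*)` for every `g`.
The minimizer `g*` is only measurable, but `|g*| ≤ M := sup |F|`, and whenever `g* - g ≤ R` the
gap `J(g) - J(g*)` is at most `exp (R/ε) ‖g* - g‖_{L¹(P)}`. Approximating `g*` in `L¹(P)` by
continuous functions and clamping them from below at `-M` keeps `R = 2M`, so the infimum over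
continuous `g` is still `J(g*)`.
-/

open ProbabilityTheory Real

section Elementary

variable {ε : ℝ}

lemma le_mul_exp_div_sub_one (hε : 0 < ε) (t : ℝ) : t ≤ ε * (exp (t / ε) - 1) :=
  calc t = ε * (t / ε) := by field_simp
    _ ≤ ε * (exp (t / ε) - 1) := by gcongr; linarith [add_one_le_exp (t / ε)]

lemma mul_exp_div_sub_one_sub_le (hε : 0 < ε) {t R : ℝ} (hR : 0 ≤ R) (htR : t ≤ R) :
    ε * (exp (t / ε) - 1) - t ≤ exp (R / ε) * |t| := by
  have hs : exp (t / ε) - 1 ≤ t / ε * exp (t / ε) := by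
    have := mul_le_mul_of_nonneg_right (one_sub_le_exp_neg (t / ε)) (exp_pos (t / ε)).le
    rw [← exp_add, neg_add_cancel, exp_zero] at this
    linarith
  have hεs : ε * (exp (t / ε) - 1) ≤ t * exp (t / ε) :=
    calc ε * (exp (t / ε) - 1) ≤ ε * (t / ε * exp (t / ε)) := by gcongr
      _ = t * exp (t / ε) := by field_simp
  have hR1 : 1 ≤ exp (R / ε) := one_le_exp (by positivity)
  rcases le_total 0 t with ht | ht
  · have : exp (t / ε) ≤ exp (R / ε) := by gcongr
    rw [abs_of_nonneg ht]
    nlinarith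
  · have : exp (t / ε) ≤ 1 := exp_le_one_iff.2 (div_nonpos_of_nonpos_of_nonneg ht hε.le)
    rw [abs_of_nonpos ht]
    nlinarith [exp_pos (t / ε)]

end Elementary

section Integrability

variable {α : Type*} [MeasurableSpace α] {μ : Measure α}

lemma integrable_exp_of_ae_le [IsFiniteMeasure μ] {f : α → ℝ} {C : ℝ} (hf : AEMeasurable f μ)
    (hC : ∀ᵐ x ∂μ, f x ≤ C) : Integrable (fun x => exp (f x)) μ :=
  .of_bound (measurable_exp.comp_aemeasurable hf).aestronglyMeasurable (exp C) <| by
    filter_upwards [hC] with x hx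
    rw [norm_of_nonneg (exp_pos _).le]
    exact exp_le_exp.2 hx

variable [TopologicalSpace α] {K : Set α}

lemma ContinuousOn.aestronglyMeasurable_of_ae_mem [OpensMeasurableSpace α] {E : Type*}
    [TopologicalSpace E] [TopologicalSpace.PseudoMetrizableSpace E]
    [SecondCountableTopologyEither α E] {f : α → E} (hf : ContinuousOn f K)
    (hK : MeasurableSet K) (hμK : ∀ᵐ x ∂μ, x ∈ K) : AEStronglyMeasurable f μ := by
  rw [← Measure.restrict_eq_self_of_ae_mem hμK]
  exact hf.aestronglyMeasurable hK

lemma IsCompact.exists_ae_abs_le_of_continuousOn {f : α → ℝ} (hK : IsCompact K)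
    (hf : ContinuousOn f K) (hμK : ∀ᵐ x ∂μ, x ∈ K) : ∃ C, ∀ᵐ x ∂μ, |f x| ≤ C :=
  let ⟨C, hC⟩ := hK.exists_bound_of_continuousOn hf
  ⟨C, hμK.mono fun x hx => hC x hx⟩

end Integrability

section SmoothMax

variable {α β : Type*} [MeasurableSpace α] [MeasurableSpace β]

noncomputable def smoothMax (κ : Kernel α β) (F : α × β → ℝ) (ε : ℝ) (x : α) : ℝ :=
  ε * log (∫ y, exp (F (x, y) / ε) ∂(κ x))

lemma integral_exp_sub_div {ν : Measure β} [NeZero ν] {f : β → ℝ} {c ε : ℝ} (hε : ε ≠ 0)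
    (hf : Integrable (fun y => exp ((f y - c) / ε)) ν) :
    ∫ y, exp ((f y - c) / ε) ∂ν = exp ((ε * log (∫ y, exp (f y / ε) ∂ν) - c) / ε) := by
  have hsplit : ∫ y, exp (f y / ε) ∂ν = (∫ y, exp ((f y - c) / ε) ∂ν) * exp (c / ε) := by
    rw [← integral_mul_const]
    congr with y
    rw [← exp_add]
    congr 1
    ring
  have hpos := integral_exp_pos hf
  rw [hsplit, show ∀ a, (ε * a - c) / ε = a - c / ε by intro a; field_simp, exp_sub,
    exp_log (by positivity), mul_div_cancel_right₀ _ (exp_pos _).ne']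

lemma abs_mul_log_integral_exp_le {ν : Measure β} [IsProbabilityMeasure ν] {f : β → ℝ}
    {M ε : ℝ} (hε : 0 < ε) (hf : Integrable (fun y => exp (f y / ε)) ν)
    (hM : ∀ᵐ y ∂ν, |f y| ≤ M) : |ε * log (∫ y, exp (f y / ε) ∂ν)| ≤ M := by
  have hlo : exp (-M / ε) ≤ ∫ y, exp (f y / ε) ∂ν := by
    simpa using integral_mono_ae (integrable_const _) hf <| hM.mono fun y hy =>
      exp_le_exp.2 (div_le_div_of_nonneg_right (neg_le_of_abs_le hy) hε.le)
  have hhi : ∫ y, exp (f y / ε) ∂ν ≤ exp (M / ε) := by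
    simpa using integral_mono_ae hf (integrable_const _) <| hM.mono fun y hy =>
      exp_le_exp.2 (div_le_div_of_nonneg_right (le_of_abs_le hy) hε.le)
  have hpos := (exp_pos _).trans_le hlo
  rw [abs_mul, abs_of_pos hε, ← le_div_iff₀' hε, abs_le, neg_div', le_log_iff_exp_le hpos,
    log_le_iff_le_exp hpos]
  exact ⟨hlo, hhi⟩

variable {ρ : Measure (α × β)} [IsFiniteMeasure ρ] {F : α × β → ℝ} {ε : ℝ}

lemma integrable_exp_sub_fst {g : α → ℝ} {M c : ℝ} (hε : 0 < ε) (hF : AEMeasurable F ρ)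
    (hFM : ∀ᵐ z ∂ρ, F z ≤ M) (hg : AEMeasurable g ρ.fst) (hgc : ∀ᵐ x ∂ρ.fst, -c ≤ g x) :
    Integrable (fun z => exp ((F z - g z.1) / ε)) ρ := by
  have hgc' : ∀ᵐ z ∂ρ, -c ≤ g z.1 := ae_of_ae_map measurable_fst.aemeasurable hgc
  refine integrable_exp_of_ae_le ((hF.sub (hg.comp_measurable measurable_fst)).div_const ε)
    (C := (M + c) / ε) ?_
  filter_upwards [hFM, hgc'] with z h1 h2
  exact div_le_div_of_nonneg_right (by linarith) hε.le

variable [StandardBorelSpace β] [Nonempty β]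

lemma aemeasurable_smoothMax (hF : AEMeasurable F ρ) :
    AEMeasurable (smoothMax ρ.condKernel F ε) ρ.fst :=
  (measurable_log.comp_aemeasurable (measurable_exp.comp_aemeasurable
    (hF.div_const ε)).aestronglyMeasurable.integral_condKernel.aemeasurable).const_mul ε

lemma ae_abs_smoothMax_le {M : ℝ} (hε : 0 < ε) (hF : AEMeasurable F ρ)
    (hM : ∀ᵐ z ∂ρ, |F z| ≤ M) : ∀ᵐ x ∂ρ.fst, |smoothMax ρ.condKernel F ε x| ≤ M := by
  have hint : Integrable (fun z => exp (F z / ε)) ρ :=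
    integrable_exp_of_ae_le (hF.div_const ε) (C := M / ε) <| hM.mono fun z hz =>
      div_le_div_of_nonneg_right (le_of_abs_le hz) hε.le
  rw [← ρ.disintegrate ρ.condKernel] at hM
  filter_upwards [hint.condKernel_ae, Measure.ae_ae_of_ae_compProd hM] with x hx hxM
  exact abs_mul_log_integral_exp_le hε hx hxM

lemma integral_exp_sub_fst_sub_one [IsProbabilityMeasure ρ] (hε : ε ≠ 0) {g : α → ℝ}
    (hg : Integrable (fun z => exp ((F z - g z.1) / ε)) ρ) :
    ∫ z, (exp ((F z - g z.1) / ε) - 1) ∂ρ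
      = ∫ x, exp ((smoothMax ρ.condKernel F ε x - g x) / ε) ∂ρ.fst - 1 := by
  rw [integral_sub hg (integrable_const 1), ← Measure.integral_condKernel hg]
  simp only [integral_const, probReal_univ, smul_eq_mul, one_mul]
  congr 1
  refine integral_congr_ae ?_
  filter_upwards [hg.condKernel_ae] with x hx
  exact integral_exp_sub_div hε hx

end SmoothMax

section ReducedFunctional

variable {α : Type*} [MeasurableSpace α] {μ : Measure α} [IsProbabilityMeasure μ]
  {u g : α → ℝ} {ε : ℝ}

noncomputable def reducedFunctional (μ : Measure α) (u : α → ℝ) (ε : ℝ) (g : α → ℝ) : ℝ :=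
  ∫ x, g x ∂μ + ε * (∫ x, exp ((u x - g x) / ε) ∂μ - 1)

lemma reducedFunctional_self : reducedFunctional μ u ε u = ∫ x, u x ∂μ := by
  simp [reducedFunctional]

lemma integrable_exp_sub_div_of_ae_le {R : ℝ} (hε : 0 < ε) (hu : Integrable u μ)
    (hg : Integrable g μ) (hugR : ∀ᵐ x ∂μ, u x - g x ≤ R) :
    Integrable (fun x => exp ((u x - g x) / ε)) μ :=
  integrable_exp_of_ae_le ((hu.sub hg).aemeasurable.div_const ε)
    (hugR.mono fun _ hx => div_le_div_of_nonneg_right hx hε.le)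

lemma reducedFunctional_sub_integral (hu : Integrable u μ) (hg : Integrable g μ)
    (he : Integrable (fun x => exp ((u x - g x) / ε)) μ) :
    reducedFunctional μ u ε g - ∫ x, u x ∂μ
      = ∫ x, (ε * (exp ((u x - g x) / ε) - 1) - (u x - g x)) ∂μ := by
  have h₁ : Integrable (fun x => ε * (exp ((u x - g x) / ε) - 1)) μ :=
    (he.sub (integrable_const 1)).const_mul ε
  have h₂ : Integrable (fun x => u x - g x) μ := hu.sub hg
  rw [integral_sub h₁ h₂, integral_const_mul, integral_sub he (integrable_const 1),
    integral_sub hu hg, reducedFunctional]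
  simp only [integral_const, probReal_univ, smul_eq_mul, one_mul]
  ring

lemma integral_le_reducedFunctional (hε : 0 < ε) (hu : Integrable u μ) (hg : Integrable g μ)
    (he : Integrable (fun x => exp ((u x - g x) / ε)) μ) :
    ∫ x, u x ∂μ ≤ reducedFunctional μ u ε g := by
  rw [← sub_nonneg, reducedFunctional_sub_integral hu hg he]
  exact integral_nonneg fun x => sub_nonneg.2 (le_mul_exp_div_sub_one hε _)

lemma reducedFunctional_le (hε : 0 < ε) {R : ℝ} (hR : 0 ≤ R) (hu : Integrable u μ)
    (hg : Integrable g μ) (hugR : ∀ᵐ x ∂μ, u x - g x ≤ R) :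
    reducedFunctional μ u ε g ≤ ∫ x, u x ∂μ + exp (R / ε) * ∫ x, |u x - g x| ∂μ := by
  have he := integrable_exp_sub_div_of_ae_le hε hu hg hugR
  rw [← sub_le_iff_le_add', reducedFunctional_sub_integral hu hg he, ← integral_const_mul]
  refine integral_mono_ae ?_ ((hu.sub hg).abs.const_mul _)
    (hugR.mono fun x hx => mul_exp_div_sub_one_sub_le hε hR hx)
  exact ((he.sub (integrable_const 1)).const_mul ε).sub (hu.sub hg)

end ReducedFunctional

section Approximation

variable {X : Type*} [TopologicalSpace X] [MeasurableSpace X] [BorelSpace X] {μ : Measure X}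
  [μ.WeaklyRegular] {u : X → ℝ} {M : ℝ}

lemma MeasureTheory.Integrable.exists_continuous_ge_integral_abs_sub_lt [NormalSpace X]
    [IsFiniteMeasure μ] {η : ℝ} (hu : Integrable u μ) (huM : ∀ᵐ x ∂μ, -M ≤ u x) (hη : 0 < η) :
    ∃ g : X → ℝ, Continuous g ∧ Integrable g μ ∧ (∀ x, -M ≤ g x) ∧
      ∫ x, |u x - g x| ∂μ < η := by
  obtain ⟨h, hh, hhi⟩ := hu.exists_boundedContinuous_integral_sub_le (half_pos hη)
  refine ⟨fun x => max (h x) (-M), h.continuous.max continuous_const,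
    hhi.sup (integrable_const _), fun x => le_max_right _ _, ?_⟩
  have hclamp : ∀ᵐ x ∂μ, |u x - max (h x) (-M)| ≤ ‖u x - h x‖ := by
    filter_upwards [huM] with x hx
    simpa [max_eq_left hx] using abs_max_sub_max_le_abs (u x) (h x) (-M)
  calc ∫ x, |u x - max (h x) (-M)| ∂μ ≤ ∫ x, ‖u x - h x‖ ∂μ :=
        integral_mono_ae (hu.sub (hhi.sup (integrable_const _))).abs (hu.sub hhi).norm hclamp
    _ < η := hh.trans_lt (half_lt_self hη)

lemma sInf_reducedFunctional_continuousOn [T4Space X] [IsProbabilityMeasure μ] {K : Set X}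
    {ε : ℝ} (hK : IsCompact K) (hμK : ∀ᵐ x ∂μ, x ∈ K) (hε : 0 < ε) (hu : Integrable u μ)
    (huM : ∀ᵐ x ∂μ, |u x| ≤ M) :
    sInf {r : ℝ | ∃ g : X → ℝ, ContinuousOn g K ∧ r = reducedFunctional μ u ε g}
      = ∫ x, u x ∂μ := by
  refine csInf_eq_of_forall_ge_of_forall_gt_exists_lt ⟨_, 0, continuousOn_const, rfl⟩ ?_ ?_
  · rintro _ ⟨g, hg, rfl⟩
    obtain ⟨c, hgc⟩ := hK.exists_ae_abs_le_of_continuousOn hg hμK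
    have hgi : Integrable g μ :=
      .of_bound (hg.aestronglyMeasurable_of_ae_mem hK.measurableSet hμK) c hgc
    refine integral_le_reducedFunctional hε hu hgi
      (integrable_exp_sub_div_of_ae_le hε hu hgi (R := M + c) ?_)
    filter_upwards [huM, hgc] with x hux hgx
    linarith [le_of_abs_le hux, neg_le_of_abs_le hgx]
  · intro w hw
    have hM : 0 ≤ M := huM.exists.elim fun x hx => (abs_nonneg _).trans hx
    obtain ⟨g, hgc, hgi, hgM, hug⟩ := hu.exists_continuous_ge_integral_abs_sub_lt
      (huM.mono fun x hx => neg_le_of_abs_le hx) (div_pos (sub_pos.2 hw) (exp_pos (2 * M / ε)))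
    refine ⟨_, ⟨g, hgc.continuousOn, rfl⟩, ?_⟩
    calc reducedFunctional μ u ε g ≤ ∫ x, u x ∂μ + exp (2 * M / ε) * ∫ x, |u x - g x| ∂μ :=
          reducedFunctional_le hε (by positivity) hu hgi <| huM.mono fun x hx => by
            linarith [le_of_abs_le hx, hgM x]
      _ < w := by
          rw [lt_div_iff₀ (exp_pos _)] at hug
          linarith

end Approximation

lemma entFunctional_eq_reducedFunctional {d : ℕ}
    {π₀ : Measure (EuclideanSpace ℝ (Fin d) × EuclideanSpace ℝ (Fin d))} [IsProbabilityMeasure π₀]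
    {F : EuclideanSpace ℝ (Fin d) × EuclideanSpace ℝ (Fin d) → ℝ} {g : EuclideanSpace ℝ (Fin d) → ℝ}
    {ε M c : ℝ} (hε : 0 < ε) (hF : AEMeasurable F π₀) (hFM : ∀ᵐ z ∂π₀, F z ≤ M)
    (hg : Integrable g π₀.fst) (hgc : ∀ᵐ x ∂π₀.fst, -c ≤ g x) :
    entFunctional π₀.fst π₀ F ε g = reducedFunctional π₀.fst (entMinimizer π₀ F ε) ε g := by
  rw [entFunctional, integral_exp_sub_fst_sub_one hε.ne'
    (integrable_exp_sub_fst hε hF hFM hg.aemeasurable hgc)]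
  rfl

theorem stmt_6_general {d : ℕ} (S : Set (EuclideanSpace ℝ (Fin d))) (hS : IsCompact S)
    (P : Measure (EuclideanSpace ℝ (Fin d))) (hP : P S = 1)
    (π₀ : Measure (EuclideanSpace ℝ (Fin d) × EuclideanSpace ℝ (Fin d)))
    [IsProbabilityMeasure π₀] (hπ₀S : π₀ (S ×ˢ S) = 1) (hπ₀fst : π₀.fst = P)
    (F : EuclideanSpace ℝ (Fin d) × EuclideanSpace ℝ (Fin d) → ℝ)
    (hF : ContinuousOn F (S ×ˢ S)) (ε : ℝ) (hε : 0 < ε) :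
    entFunctional P π₀ F ε (entMinimizer π₀ F ε)
        = ε * ∫ x, Real.log (∫ y, Real.exp (F (x, y) / ε) ∂(π₀.condKernel x)) ∂P ∧
    sInf {r : ℝ | ∃ g : EuclideanSpace ℝ (Fin d) → ℝ, ContinuousOn g S ∧
          r = entFunctional P π₀ F ε g}
      = entFunctional P π₀ F ε (entMinimizer π₀ F ε) := by
  subst hπ₀fst
  have hPS : ∀ᵐ x ∂π₀.fst, x ∈ S := (mem_ae_iff_prob_eq_one hS.measurableSet).2 hP
  have hπ₀SS : ∀ᵐ z ∂π₀, z ∈ S ×ˢ S :=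
    (mem_ae_iff_prob_eq_one (hS.prod hS).measurableSet).2 hπ₀S
  have hFm := (hF.aestronglyMeasurable_of_ae_mem (hS.prod hS).measurableSet hπ₀SS).aemeasurable
  obtain ⟨M, hF_abs⟩ := (hS.prod hS).exists_ae_abs_le_of_continuousOn hF hπ₀SS
  have hF_le : ∀ᵐ z ∂π₀, F z ≤ M := hF_abs.mono fun _ => le_of_abs_le
  have huM : ∀ᵐ x ∂π₀.fst, |entMinimizer π₀ F ε x| ≤ M := ae_abs_smoothMax_le hε hFm hF_abs
  have hu : Integrable (entMinimizer π₀ F ε) π₀.fst :=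
    .of_bound (aemeasurable_smoothMax hFm).aestronglyMeasurable M huM
  have hJu : entFunctional π₀.fst π₀ F ε (entMinimizer π₀ F ε)
      = ∫ x, entMinimizer π₀ F ε x ∂π₀.fst :=
    (entFunctional_eq_reducedFunctional hε hFm hF_le hu
      (huM.mono fun _ => neg_le_of_abs_le)).trans reducedFunctional_self
  refine ⟨hJu.trans (integral_const_mul ε _), ?_⟩
  rw [hJu, ← sInf_reducedFunctional_continuousOn hS hPS hε hu huM]
  congr with r
  refine exists_congr fun g => and_congr_right fun hg => ?_
  obtain ⟨c, hgc⟩ := hS.exists_ae_abs_le_of_continuousOn hg hPS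
  rw [entFunctional_eq_reducedFunctional hε hFm hF_le
    (.of_bound (hg.aestronglyMeasurable_of_ae_mem hS.measurableSet hPS) c hgc)
    (hgc.mono fun _ => neg_le_of_abs_le)]

/-- The infimum of `g ↦ E_P[g] + ε E_{π₀}[e^{(F−g)/ε} − 1]` over continuous functions is
attained at `g*(x) = ε log ∫ e^{F(x,y)/ε} π₀(dy|x)`, with optimal value
`ε E_{x∼P}[log E_{y∼π₀(·|x)} e^{F(x,y)/ε}]`. -/
theorem stmt_6 {d : ℕ} (S : Set (EuclideanSpace ℝ (Fin d))) (hS : IsCompact S)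
    (P : Measure (EuclideanSpace ℝ (Fin d))) [IsProbabilityMeasure P] (hP : P S = 1)
    (π₀ : Measure (EuclideanSpace ℝ (Fin d) × EuclideanSpace ℝ (Fin d)))
    [IsProbabilityMeasure π₀] (hπ₀S : π₀ (S ×ˢ S) = 1) (hπ₀fst : π₀.fst = P)
    (F : EuclideanSpace ℝ (Fin d) × EuclideanSpace ℝ (Fin d) → ℝ)
    (hF : ContinuousOn F (S ×ˢ S)) (ε : ℝ) (hε : 0 < ε) :
    entFunctional P π₀ F ε (entMinimizer π₀ F ε)
        = ε * ∫ x, Real.log (∫ y, Real.exp (F (x, y) / ε) ∂(π₀.condKernel x)) ∂P ∧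
    sInf {r : ℝ | ∃ g : EuclideanSpace ℝ (Fin d) → ℝ, ContinuousOn g S ∧
          r = entFunctional P π₀ F ε g}
      = entFunctional P π₀ F ε (entMinimizer π₀ F ε) :=
  stmt_6_general S hS P hP π₀ hπ₀S hπ₀fst F hF ε hε
end

section
/- Let S ⊆ ℝ^d be compact convex, P a probability measure on S, f : S → ℝ and c : S×S → [0,∞) continuous with c(x,x)=0 for all x, and ρ > 0. For parameters τ, δ ≥ 0 define G^{τ,δ}_ρ := sup{ E_{π₂} f − τ E_π c : π ∈ Π_P, E_π c + δ E_π c ≤ ρ }, where Π_P is the set of couplings with first marginal P and π₂ is the second marginal. Then G^{0,0}_{ρ/(1+δ)} − τρ/(1+δ) ≤ G^{τ,δ}_ρ ≤ G^{0,0}_ρ. -/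
open MeasureTheory

/-- The cost-regularized WDRO value
`G^{τ,δ}_ρ = sup{E_{π₂} f − τ E_π c : π ∈ Π_P, E_π c + δ E_π c ≤ ρ}`. -/
noncomputable def wdroCostReg {d : ℕ} (S : Set (EuclideanSpace ℝ (Fin d)))
    (P : Measure (EuclideanSpace ℝ (Fin d)))
    (f : EuclideanSpace ℝ (Fin d) → ℝ)
    (c : EuclideanSpace ℝ (Fin d) × EuclideanSpace ℝ (Fin d) → ℝ)
    (τ δ ρ : ℝ) : ℝ :=
  sSup {r : ℝ | ∃ π : Measure (EuclideanSpace ℝ (Fin d) × EuclideanSpace ℝ (Fin d)),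
    IsProbabilityMeasure π ∧ π (S ×ˢ S) = 1 ∧ π.fst = P ∧
    (∫ z, c z ∂π) + δ * (∫ z, c z ∂π) ≤ ρ ∧
    r = (∫ z, f z.2 ∂π) - τ * (∫ z, c z ∂π)}

/-- Approximation bounds for the cost-regularized WDRO value:
`G^{0,0}_{ρ/(1+δ)} − τρ/(1+δ) ≤ G^{τ,δ}_ρ ≤ G^{0,0}_ρ`. -/
theorem stmt_9 {d : ℕ} (S : Set (EuclideanSpace ℝ (Fin d))) (hScomp : IsCompact S)
    (hSconv : Convex ℝ S)
    (P : Measure (EuclideanSpace ℝ (Fin d))) [IsProbabilityMeasure P] (hP : P S = 1)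
    (f : EuclideanSpace ℝ (Fin d) → ℝ) (hf : ContinuousOn f S)
    (c : EuclideanSpace ℝ (Fin d) × EuclideanSpace ℝ (Fin d) → ℝ)
    (hc : ContinuousOn c (S ×ˢ S)) (hc_nonneg : ∀ z ∈ S ×ˢ S, 0 ≤ c z)
    (hc_diag : ∀ x ∈ S, c (x, x) = 0)
    (ρ τ δ : ℝ) (hρ : 0 < ρ) (hτ : 0 ≤ τ) (hδ : 0 ≤ δ) :
    wdroCostReg S P f c 0 0 (ρ / (1 + δ)) - τ * ρ / (1 + δ) ≤ wdroCostReg S P f c τ δ ρ ∧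
    wdroCostReg S P f c τ δ ρ ≤ wdroCostReg S P f c 0 0 ρ := by
  classical
  set A : ℝ → ℝ → ℝ → Set ℝ := fun τ' δ' ρ' =>
    {r : ℝ | ∃ π : Measure (EuclideanSpace ℝ (Fin d) × EuclideanSpace ℝ (Fin d)),
      IsProbabilityMeasure π ∧ π (S ×ˢ S) = 1 ∧ π.fst = P ∧
      (∫ z, c z ∂π) + δ' * (∫ z, c z ∂π) ≤ ρ' ∧
      r = (∫ z, f z.2 ∂π) - τ' * (∫ z, c z ∂π)} with hA
  have hwA : ∀ τ' δ' ρ', wdroCostReg S P f c τ' δ' ρ' = sSup (A τ' δ' ρ') := by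
    intro τ' δ' ρ'; rfl
  have h1δ : (0:ℝ) < 1 + δ := by linarith
  have hSS_meas : MeasurableSet (S ×ˢ S) :=
    ((hScomp.isClosed).prod (hScomp.isClosed)).measurableSet
  -- S is nonempty
  have hS_ne : S.Nonempty := by
    rcases Set.eq_empty_or_nonempty S with h | h
    · exfalso; rw [h] at hP; simp at hP
    · exact h
  -- bound on f over S
  obtain ⟨M0, hM0⟩ := (hScomp.bddAbove_image hf)
  have hM0' : ∀ x ∈ S, f x ≤ M0 := fun x hx => hM0 (Set.mem_image_of_mem f hx)
  set M : ℝ := max M0 0 with hM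
  -- nonnegativity of the cost integral, and f-integral bound, for feasible π
  have hkey : ∀ (π : Measure (EuclideanSpace ℝ (Fin d) × EuclideanSpace ℝ (Fin d))),
      IsProbabilityMeasure π → π (S ×ˢ S) = 1 →
      0 ≤ (∫ z, c z ∂π) ∧ (∫ z, f z.2 ∂π) ≤ M := by
    intro π hπ hπSS
    have hcompl : π ((S ×ˢ S)ᶜ) = 0 := by
      rw [prob_compl_eq_zero_iff hSS_meas]; exact hπSS
    have hae : ∀ᵐ z ∂π, z ∈ S ×ˢ S := by
      rw [MeasureTheory.ae_iff]
      refine measure_mono_null ?_ hcompl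
      intro z hz; exact hz
    constructor
    · refine integral_nonneg_of_ae ?_
      filter_upwards [hae] with z hz
      exact hc_nonneg z hz
    · by_cases hint : Integrable (fun z => f z.2) π
      · have hle : ∀ᵐ z ∂π, f z.2 ≤ M := by
          filter_upwards [hae] with z hz
          exact le_trans (hM0' z.2 hz.2) (le_max_left _ _)
        calc (∫ z, f z.2 ∂π) ≤ ∫ (_ : _ × _), M ∂π :=
              integral_mono_ae hint (integrable_const M) hle
          _ = M := by simp
      · rw [integral_undef hint]; exact le_max_right _ _
  -- bounded above
  have hbdd : ∀ τ' δ' ρ', 0 ≤ τ' → BddAbove (A τ' δ' ρ') := by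
    intro τ' δ' ρ' hτ'
    refine ⟨M, ?_⟩
    rintro r ⟨π, hπ, hπSS, hfst, hcon, hr⟩
    obtain ⟨hc0, hfM⟩ := hkey π hπ hπSS
    rw [hr]
    nlinarith
  -- nonempty via the diagonal coupling
  have hne : ∀ τ' δ' ρ', 0 ≤ ρ' → (A τ' δ' ρ').Nonempty := by
    intro τ' δ' ρ' hρ'
    have hg : Measurable (fun x : EuclideanSpace ℝ (Fin d) => (x, x)) :=
      measurable_id.prodMk measurable_id
    set π₀ := P.map (fun x => (x, x)) with hπ₀
    have hπ₀prob : IsProbabilityMeasure π₀ := Measure.isProbabilityMeasure_map hg.aemeasurable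
    have hπ₀SS : π₀ (S ×ˢ S) = 1 := by
      rw [hπ₀, Measure.map_apply hg hSS_meas]
      have : (fun x : EuclideanSpace ℝ (Fin d) => (x, x)) ⁻¹' (S ×ˢ S) = S := by
        ext x; simp [Set.mem_prod]
      rw [this, hP]
    have hfst : π₀.fst = P := by
      rw [hπ₀, Measure.fst, Measure.map_map measurable_fst hg]
      have : (Prod.fst ∘ fun x : EuclideanSpace ℝ (Fin d) => (x, x)) = id := rfl
      rw [this, Measure.map_id]
    have hc_zero : (∫ z, c z ∂π₀) = 0 := by
      have hD : MeasurableSet ((S ×ˢ S) ∩ {z : EuclideanSpace ℝ (Fin d) ×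
          EuclideanSpace ℝ (Fin d) | z.1 = z.2}) :=
        hSS_meas.inter ((isClosed_eq continuous_fst continuous_snd).measurableSet)
      have hπ₀D : π₀ (((S ×ˢ S) ∩ {z | z.1 = z.2})ᶜ) = 0 := by
        rw [prob_compl_eq_zero_iff hD, hπ₀, Measure.map_apply hg hD]
        have : (fun x : EuclideanSpace ℝ (Fin d) => (x, x)) ⁻¹'
            ((S ×ˢ S) ∩ {z | z.1 = z.2}) = S := by
          ext x; simp [Set.mem_prod]
        rw [this, hP]
      have hae0 : c =ᵐ[π₀] 0 := by
        rw [Filter.EventuallyEq, MeasureTheory.ae_iff]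
        refine measure_mono_null ?_ hπ₀D
        intro z hz
        simp only [Set.mem_setOf_eq] at hz
        intro hmem
        apply hz
        obtain ⟨hzS, hzd⟩ := hmem
        have : z = (z.1, z.1) := by
          rw [Prod.ext_iff]; exact ⟨rfl, hzd.symm⟩
        rw [this]
        exact hc_diag z.1 hzS.1
      rw [integral_congr_ae hae0]; simp
    refine ⟨(∫ z, f z.2 ∂π₀) - τ' * (∫ z, c z ∂π₀), π₀, hπ₀prob, hπ₀SS, hfst, ?_, rfl⟩
    rw [hc_zero]; simpa using hρ'
  constructor
  · -- lower bound
    rw [hwA, hwA, sub_le_iff_le_add]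
    refine csSup_le (hne 0 0 _ (le_of_lt (div_pos hρ h1δ))) ?_
    rintro r ⟨π, hπ, hπSS, hfst, hcon, hr⟩
    obtain ⟨hc0, _⟩ := hkey π hπ hπSS
    have hcle : (∫ z, c z ∂π) ≤ ρ / (1 + δ) := by linarith
    have hmem : (∫ z, f z.2 ∂π) - τ * (∫ z, c z ∂π) ∈ A τ δ ρ := by
      refine ⟨π, hπ, hπSS, hfst, ?_, rfl⟩
      have : (1 + δ) * (∫ z, c z ∂π) ≤ ρ := by
        rw [← le_div_iff₀' h1δ]; exact hcle
      linarith
    have hle := le_csSup (hbdd τ δ ρ hτ) hmem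
    have hτc : τ * (∫ z, c z ∂π) ≤ τ * ρ / (1 + δ) := by
      rw [mul_div_assoc]
      exact mul_le_mul_of_nonneg_left hcle hτ
    rw [hr]
    linarith
  · -- upper bound
    rw [hwA, hwA]
    refine csSup_le (hne τ δ ρ (le_of_lt hρ)) ?_
    rintro r ⟨π, hπ, hπSS, hfst, hcon, hr⟩
    obtain ⟨hc0, _⟩ := hkey π hπ hπSS
    have hmem : (∫ z, f z.2 ∂π) - 0 * (∫ z, c z ∂π) ∈ A 0 0 ρ := by
      refine ⟨π, hπ, hπSS, hfst, ?_, rfl⟩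
      nlinarith
    have hle := le_csSup (hbdd 0 0 ρ le_rfl) hmem
    rw [hr]
    nlinarith
end

section
/- Let S ⊆ ℝ^d be compact convex, P a probability measure on S, f : S → ℝ and c : S×S → [0,∞) continuous with c(x,x)=0, ρ > 0, ε, δ > 0, and π₀ a coupling with first marginal P satisfying E_{π₀} c < ρ. Suppose strong duality holds: the entropic WDRO value equals inf_{λ ≥ 0} D(λ) where D(λ) := λρ + (ε+λδ) E_{x∼P} log( E_{y∼π₀(·|x)} e^{(f(y)−λc(x,y))/(ε+λδ)} ), attained at some λ*. Then λ* ≤ 2 sup_S |f| / (ρ − E_{π₀} c). -/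
/-!
Compare the dual function at `λ*` with its value at `0`, writing `M = sup_S |f|`.
Since `e^{f/ε} ≤ e^{M/ε}` on `S`, `D(0) ≤ M`. Jensen's inequality `∫ g ≤ log ∫ e^g` on each
fibre `π₀(·|x)` and the disintegration of `π₀` give
`D(λ*) ≥ λ*ρ + E_{π₀}[f(y) − λ*c] ≥ λ*(ρ − E_{π₀}c) − M`,
so minimality of `λ*` yields `λ*(ρ − E_{π₀}c) ≤ 2M`.
-/

open MeasureTheory ProbabilityTheory Real

section IntegralBounds

variable {α : Type*} [MeasurableSpace α] {μ : Measure α} {g : α → ℝ}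

lemma integrable_exp_of_ae_le_s10 [IsFiniteMeasure μ] {B : ℝ} (hg : AEMeasurable g μ)
    (hB : ∀ᵐ y ∂μ, g y ≤ B) : Integrable (fun y => exp (g y)) μ :=
  .of_mem_Icc 0 (exp B) (measurable_exp.comp_aemeasurable hg) <|
    hB.mono fun _ hy => ⟨(exp_pos _).le, exp_le_exp.2 hy⟩

lemma integral_le_log_integral_exp [IsProbabilityMeasure μ] {B : ℝ} (hg : Integrable g μ)
    (hB : ∀ᵐ y ∂μ, g y ≤ B) : ∫ y, g y ∂μ ≤ log (∫ y, exp (g y) ∂μ) := by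
  have hjensen : exp (∫ y, g y ∂μ) ≤ ∫ y, exp (g y) ∂μ :=
    convexOn_exp.map_integral_le continuous_exp.continuousOn isClosed_univ
      (.of_forall fun _ => Set.mem_univ _) hg (integrable_exp_of_ae_le_s10 hg.aemeasurable hB)
  exact (le_log_iff_exp_le ((exp_pos _).trans_le hjensen)).2 hjensen

lemma log_integral_exp_le [IsProbabilityMeasure μ] {a : ℝ} (ha : 0 ≤ a)
    (hg : ∀ᵐ y ∂μ, g y ≤ a) : log (∫ y, exp (g y) ∂μ) ≤ a := by
  have hle : ∫ y, exp (g y) ∂μ ≤ exp a := by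
    by_cases hint : Integrable (fun y => exp (g y)) μ
    · simpa using integral_mono_ae hint (integrable_const (exp a)) (hg.mono fun _ => exp_le_exp.2)
    · rw [integral_undef hint]; exact (exp_pos a).le
  rcases (integral_nonneg (f := fun y => exp (g y)) fun y => (exp_pos _).le).eq_or_lt with h0 | hpos
  · rw [← h0, log_zero]; exact ha
  · exact (log_le_iff_le_exp hpos).2 hle

/-- Unlike `integral_mono_ae`, no integrability is needed: the junk value `0` is below `a`. -/
lemma integral_le_of_ae_le_of_nonneg [IsProbabilityMeasure μ] {a : ℝ} (ha : 0 ≤ a)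
    (hg : ∀ᵐ x ∂μ, g x ≤ a) : ∫ x, g x ∂μ ≤ a := by
  by_cases hint : Integrable g μ
  · simpa using integral_mono_ae hint (integrable_const a) hg
  · rw [integral_undef hint]; exact ha

lemma neg_le_integral_of_ae_abs_le [IsProbabilityMeasure μ] {M : ℝ}
    (hg : ∀ᵐ x ∂μ, |g x| ≤ M) : -M ≤ ∫ x, g x ∂μ := by
  have := norm_integral_le_of_norm_le_const (f := g) hg
  rw [probReal_univ, mul_one] at this
  exact neg_le_of_abs_le this

end IntegralBounds

section Disintegration

variable {α Ω : Type*} [MeasurableSpace α] [MeasurableSpace Ω] [StandardBorelSpace Ω]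
  [Nonempty Ω]  {ν : Measure (α × Ω)} [IsFiniteMeasure ν]

lemma ae_ae_condKernel_of_ae {p : α × Ω → Prop} (h : ∀ᵐ z ∂ν, p z) :
    ∀ᵐ x ∂ν.fst, ∀ᵐ y ∂ν.condKernel x, p (x, y) := by
  rw [← ν.disintegrate ν.condKernel] at h
  exact Measure.ae_ae_of_ae_compProd h

/-- Jensen's inequality for `log ∫ exp` on each fibre; the `min` absorbs the junk value `0` of the
outer integral when its integrand is not integrable. -/
lemma min_integral_le_mul_integral_log_integral_exp {h : α × Ω → ℝ} {σ B : ℝ}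
    (hσ : 0 < σ) (hh : Integrable h ν) (hB : ∀ᵐ x ∂ν.fst, ∀ᵐ y ∂ν.condKernel x, h (x, y) ≤ B) :
    min (∫ z, h z ∂ν) 0 ≤
      σ * ∫ x, log (∫ y, exp (h (x, y) / σ) ∂ν.condKernel x) ∂ν.fst := by
  by_cases hF : Integrable (fun x => log (∫ y, exp (h (x, y) / σ) ∂ν.condKernel x)) ν.fst
  · have hfibre : ∀ᵐ x ∂ν.fst, (∫ y, h (x, y) ∂ν.condKernel x) / σ ≤
        log (∫ y, exp (h (x, y) / σ) ∂ν.condKernel x) := by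
      filter_upwards [hh.condKernel_ae, hB] with x hx hxB
      rw [← integral_div]
      exact integral_le_log_integral_exp (hx.div_const σ)
        (hxB.mono fun _ hy => div_le_div_of_nonneg_right hy hσ.le)
    calc min (∫ z, h z ∂ν) 0 ≤ ∫ z, h z ∂ν := min_le_left _ _
      _ = σ * ∫ x, (∫ y, h (x, y) ∂ν.condKernel x) / σ ∂ν.fst := by
        rw [integral_div, Measure.integral_condKernel hh]; field_simp
      _ ≤ _ := mul_le_mul_of_nonneg_left
        (integral_mono_ae (hh.integral_condKernel.div_const σ) hF hfibre) hσ.le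
  · rw [integral_undef hF, mul_zero]; exact min_le_right _ _

end Disintegration

lemma mul_integral_log_integral_exp_le {α β : Type*} [MeasurableSpace α] [MeasurableSpace β]
    {μ : Measure α} [IsProbabilityMeasure μ] {κ : α → Measure β}
    [∀ x, IsProbabilityMeasure (κ x)]
    {g : α × β → ℝ} {σ M : ℝ} (hσ : 0 < σ) (hM : 0 ≤ M)
    (hg : ∀ᵐ x ∂μ, ∀ᵐ y ∂κ x, g (x, y) ≤ M) :
    σ * ∫ x, log (∫ y, exp (g (x, y) / σ) ∂κ x) ∂μ ≤ M := by
  rw [← le_div_iff₀' hσ]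
  refine integral_le_of_ae_le_of_nonneg (by positivity) (hg.mono fun x hx => ?_)
  exact log_integral_exp_le (by positivity)
    (hx.mono fun _ hy => div_le_div_of_nonneg_right hy hσ.le)

lemma ContinuousOn.integrable_of_ae_mem {X : Type*} [TopologicalSpace X] [T2Space X]
    [MeasurableSpace X] [OpensMeasurableSpace X] {μ : Measure X} [IsFiniteMeasure μ]
    {K : Set X} {g : X → ℝ} (hK : IsCompact K) (hg : ContinuousOn g K)
    (hμ : ∀ᵐ x ∂μ, x ∈ K) : Integrable g μ :=
  Measure.restrict_eq_self_of_ae_mem hμ ▸ hg.integrableOn_compact hK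

theorem stmt_10_general {d : ℕ} (S : Set (EuclideanSpace ℝ (Fin d))) (hS : IsCompact S)
    (P : Measure (EuclideanSpace ℝ (Fin d)))
    (f : EuclideanSpace ℝ (Fin d) → ℝ) (hf : ContinuousOn f S)
    (c : EuclideanSpace ℝ (Fin d) × EuclideanSpace ℝ (Fin d) → ℝ)
    (hc : ContinuousOn c (S ×ˢ S)) (hc_nonneg : ∀ z ∈ S ×ˢ S, 0 ≤ c z)
    (π₀ : Measure (EuclideanSpace ℝ (Fin d) × EuclideanSpace ℝ (Fin d)))
    [IsProbabilityMeasure π₀] (hπ₀S : π₀ (S ×ˢ S) = 1) (hπ₀fst : π₀.fst = P)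
    (ρ ε δ : ℝ) (hε : 0 < ε) (hδ : 0 < δ)
    (hπ₀c : ∫ z, c z ∂π₀ < ρ)
    (D : ℝ → ℝ)
    (hD : ∀ lam : ℝ, D lam = lam * ρ + (ε + lam * δ) *
      ∫ x, Real.log (∫ y, Real.exp ((f y - lam * c (x, y)) / (ε + lam * δ))
        ∂(π₀.condKernel x)) ∂P)
    (lamstar : ℝ) (hlam_nonneg : 0 ≤ lamstar)
    (hmin : ∀ lam : ℝ, 0 ≤ lam → D lamstar ≤ D lam) :
    lamstar ≤ 2 * sSup ((fun y => |f y|) '' S) / (ρ - ∫ z, c z ∂π₀) := by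
  subst hπ₀fst
  set M := sSup ((fun y => |f y|) '' S)
  have hπ₀ae : ∀ᵐ z ∂π₀, z ∈ S ×ˢ S :=
    (mem_ae_iff_prob_eq_one (hS.prod hS).isClosed.measurableSet).2 hπ₀S
  have hfM : ∀ y ∈ S, |f y| ≤ M :=
    fun y hy => le_csSup (hS.image_of_continuousOn hf.abs).bddAbove ⟨y, hy, rfl⟩
  have hM : 0 ≤ M := Real.sSup_nonneg <| by rintro _ ⟨y, -, rfl⟩; exact abs_nonneg _
  have hbound : ∀ lam, 0 ≤ lam →
      ∀ᵐ x ∂π₀.fst, ∀ᵐ y ∂π₀.condKernel x, f y - lam * c (x, y) ≤ M :=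
    fun lam hlam => (ae_ae_condKernel_of_ae hπ₀ae).mono fun x hx => hx.mono fun y hxy => by
      nlinarith [(abs_le.1 (hfM y hxy.2)).2, hc_nonneg _ hxy]
  have hupper : D lamstar ≤ M := by
    refine (hmin 0 le_rfl).trans ?_
    have hlog_le := mul_integral_log_integral_exp_le (g := fun z => f z.2 - 0 * c z)
      (σ := ε + 0 * δ) (by positivity) hM (hbound 0 le_rfl)
    rw [hD 0]; linarith
  have hfi : Integrable (fun z => f z.2) π₀ :=
    (hf.comp continuous_snd.continuousOn fun _ hz => hz.2).integrable_of_ae_mem (hS.prod hS)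
      hπ₀ae
  have hf_ge : -M ≤ ∫ z, f z.2 ∂π₀ :=
    neg_le_integral_of_ae_abs_le (hπ₀ae.mono fun z hz => hfM z.2 hz.2)
  have hci : Integrable c π₀ := hc.integrable_of_ae_mem (hS.prod hS) hπ₀ae
  have hc_int_nonneg : 0 ≤ ∫ z, c z ∂π₀ := integral_nonneg_of_ae (hπ₀ae.mono hc_nonneg)
  have hlower : lamstar * (ρ - ∫ z, c z ∂π₀) - M ≤ D lamstar := by
    have hJensen := min_integral_le_mul_integral_log_integral_exp
      (h := fun z => f z.2 - lamstar * c z) (σ := ε + lamstar * δ) (by positivity)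
      (hfi.sub (hci.const_mul lamstar)) (hbound lamstar hlam_nonneg)
    rw [integral_sub hfi (hci.const_mul lamstar), integral_const_mul] at hJensen
    have hmin_ge :
        -M - lamstar * ∫ z, c z ∂π₀ ≤ min (∫ z, f z.2 ∂π₀ - lamstar * ∫ z, c z ∂π₀) 0 :=
      le_min (by linarith) (by nlinarith)
    rw [hD lamstar]; linarith
  rw [le_div_iff₀ (sub_pos.2 hπ₀c)]
  linarith

/-- Bound on the optimal dual multiplier of the entropy-regularized WDRO problem:
if `λ*` minimizes the dual function
`D(λ) = λρ + (ε+λδ) E_{x∼P} log E_{y∼π₀(·|x)} e^{(f(y)−λc(x,y))/(ε+λδ)}` over `λ ≥ 0`,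
then `λ* ≤ 2 sup_S |f| / (ρ − E_{π₀} c)`. -/
theorem stmt_10 {d : ℕ} (S : Set (EuclideanSpace ℝ (Fin d))) (hS : IsCompact S)
    (P : Measure (EuclideanSpace ℝ (Fin d))) [IsProbabilityMeasure P] (hP : P S = 1)
    (f : EuclideanSpace ℝ (Fin d) → ℝ) (hf : ContinuousOn f S)
    (c : EuclideanSpace ℝ (Fin d) × EuclideanSpace ℝ (Fin d) → ℝ)
    (hc : ContinuousOn c (S ×ˢ S)) (hc_nonneg : ∀ z ∈ S ×ˢ S, 0 ≤ c z)
    (hc_diag : ∀ x ∈ S, c (x, x) = 0)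
    (π₀ : Measure (EuclideanSpace ℝ (Fin d) × EuclideanSpace ℝ (Fin d)))
    [IsProbabilityMeasure π₀] (hπ₀S : π₀ (S ×ˢ S) = 1) (hπ₀fst : π₀.fst = P)
    (ρ ε δ : ℝ) (hρ : 0 < ρ) (hε : 0 < ε) (hδ : 0 < δ)
    (hπ₀c : ∫ z, c z ∂π₀ < ρ)
    (D : ℝ → ℝ)
    (hD : ∀ lam : ℝ, D lam = lam * ρ + (ε + lam * δ) *
      ∫ x, Real.log (∫ y, Real.exp ((f y - lam * c (x, y)) / (ε + lam * δ))
        ∂(π₀.condKernel x)) ∂P)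
    (lamstar : ℝ) (hlam_nonneg : 0 ≤ lamstar)
    (hmin : ∀ lam : ℝ, 0 ≤ lam → D lamstar ≤ D lam) :
    lamstar ≤ 2 * sSup ((fun y => |f y|) '' S) / (ρ - ∫ z, c z ∂π₀) :=
  stmt_10_general S hS P f hf c hc hc_nonneg π₀ hπ₀S hπ₀fst ρ ε δ hε hδ hπ₀c D hD lamstar
    hlam_nonneg hmin
end

section
/- Let S ⊆ ℝ^d be compact, P a probability measure on S, f : S → ℝ and c : S×S → [0,∞) continuous with c(x,x) = 0 for all x ∈ S, and ρ > 0. Then the unregularized WDRO value satisfies strong duality: sup{ E_{π₂} f : π ∈ Π_P, E_π c ≤ ρ } = inf_{λ ≥ 0} λρ + E_{x∼P}[ sup_{y∈S} ( f(y) − λ c(x,y) ) ], and both the primal supremum and the dual infimum are attained. -/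
/-!
For `λ ≥ 0` let `φ_λ x = sup_{y ∈ S} (f y - λ c (x, y))` (`penalizedSup`) and
`V λ = λ ρ + ∫ φ_λ dP` (`dualObjective`). Weak duality is the pointwise inequality
`f y ≤ φ_λ x + λ c (x, y)` integrated against a coupling. Since `c (x, x) = 0` we have `φ_λ ≥ f`
on `S`, so `V` grows linearly and, being Lipschitz, attains its minimum at some `λ*`.

By a Danskin-type argument, the right and left derivatives of `λ ↦ φ_λ x` at `λ*` are `-a x` and
`-b x`, where `a x` and `b x` are the least and the largest cost `c (x, y)` over the maximizers `y`
of `f y - λ* c (x, y)`. Dominated convergence and the minimality of `λ*` give `∫ a dP ≤ ρ`, and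
`ρ ≤ ∫ b dP` when `λ* > 0`. Maps `T₁`, `T₂` realizing `a` and `b` are chosen measurably by a
lexicographic minimization (the two criteria, then the coordinates one by one, each stage being
measurable through a penalty approximation). A convex combination of the graph couplings of `T₁`
and `T₂` then has cost at most `ρ`, and cost exactly `ρ` if `λ* > 0`, so its value is `V λ*`.
-/

open MeasureTheory Filter Set Topology

theorem IsClosed.exists_continuous_eqOn {X : Type*} [TopologicalSpace X] [NormalSpace X]
    {s : Set X} (hs : IsClosed s) {g : X → ℝ} (hg : ContinuousOn g s) :
    ∃ g' : X → ℝ, Continuous g' ∧ EqOn g' g s := by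
  obtain ⟨G, hG⟩ := ContinuousMap.exists_restrict_eq hs ⟨s.domRestrict g, hg.domRestrict⟩
  exact ⟨G, G.continuous, fun x hx => DFunLike.congr_fun hG ⟨x, hx⟩⟩

theorem integrable_of_continuousOn_of_ae_mem {α : Type*} [TopologicalSpace α] [T2Space α]
    [MeasurableSpace α] [OpensMeasurableSpace α] {μ : Measure α} [IsFiniteMeasure μ] {K : Set α}
    (hK : IsCompact K) (hμK : ∀ᵐ x ∂μ, x ∈ K) {φ : α → ℝ} (hφ : ContinuousOn φ K) :
    Integrable φ μ := by
  simpa [IntegrableOn, Measure.restrict_eq_self_of_ae_mem hμK] using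
    hφ.integrableOn_compact hK (μ := μ)

theorem abs_integral_sub_le_of_ae_lipschitz {α : Type*} [MeasurableSpace α] {μ : Measure α}
    [IsProbabilityMeasure μ] {G : ℝ → α → ℝ} {C : ℝ} (hG : ∀ t, Integrable (G t) μ)
    (hlip : ∀ᵐ x ∂μ, ∀ t t', |G t x - G t' x| ≤ C * |t - t'|) (t t' : ℝ) :
    |∫ x, G t x ∂μ - ∫ x, G t' x ∂μ| ≤ C * |t - t'| := by
  rw [← integral_sub (hG t) (hG t')]
  calc |∫ x, (G t x - G t' x) ∂μ| ≤ ∫ x, |G t x - G t' x| ∂μ := abs_integral_le_integral_abs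
    _ ≤ ∫ _, C * |t - t'| ∂μ :=
      integral_mono_ae ((hG t).sub (hG t')).abs (integrable_const _)
        (hlip.mono fun x hx => hx t t')
    _ = C * |t - t'| := by simp

theorem tendsto_integral_slope {α : Type*} [MeasurableSpace α] {μ : Measure α}
    [IsFiniteMeasure μ] {G : ℝ → α → ℝ} {C t₀ : ℝ} {D : α → ℝ} {L : Filter ℝ}
    [L.IsCountablyGenerated] (hL : ∀ᶠ s in L, s ≠ 0) (hG : ∀ t, Integrable (G t) μ)
    (hlip : ∀ᵐ x ∂μ, ∀ t t', |G t x - G t' x| ≤ C * |t - t'|)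
    (hD : ∀ᵐ x ∂μ, Tendsto (fun s => (G (t₀ + s) x - G t₀ x) / s) L (𝓝 (D x))) :
    Tendsto (fun s => (∫ x, G (t₀ + s) x ∂μ - ∫ x, G t₀ x ∂μ) / s) L (𝓝 (∫ x, D x ∂μ)) := by
  have hquot : ∀ s, (∫ x, G (t₀ + s) x ∂μ - ∫ x, G t₀ x ∂μ) / s
      = ∫ x, (G (t₀ + s) x - G t₀ x) / s ∂μ := fun s => by
    rw [← integral_sub (hG _) (hG _), integral_div]
  simp only [hquot]
  refine tendsto_integral_filter_of_dominated_convergence (fun _ => C)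
    (Eventually.of_forall fun s => (((hG _).sub (hG _)).div_const s).aestronglyMeasurable)
    ?_ (integrable_const C) hD
  filter_upwards [hL] with s hs
  filter_upwards [hlip] with x hx
  rw [Real.norm_eq_abs, abs_div, div_le_iff₀ (abs_pos.2 hs)]
  simpa using hx (t₀ + s) t₀

theorem integral_mix {α : Type*} [MeasurableSpace α] {μ ν : Measure α} {φ : α → ℝ}
    (hμ : Integrable φ μ) (hν : Integrable φ ν) {θ : ℝ} (hθ₀ : 0 ≤ θ) (hθ₁ : θ ≤ 1) :
    ∫ z, φ z ∂(ENNReal.ofReal θ • μ + ENNReal.ofReal (1 - θ) • ν)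
      = θ * ∫ z, φ z ∂μ + (1 - θ) * ∫ z, φ z ∂ν := by
  rw [integral_add_measure (hμ.smul_measure ENNReal.ofReal_ne_top)
    (hν.smul_measure ENNReal.ofReal_ne_top), integral_smul_measure, integral_smul_measure,
    ENNReal.toReal_ofReal hθ₀, ENNReal.toReal_ofReal (sub_nonneg.2 hθ₁), smul_eq_mul, smul_eq_mul]

theorem ContinuousOn.exists_isMinOn_Ici_of_affine_le {V : ℝ → ℝ} (hV : ContinuousOn V (Ici 0))
    {a b : ℝ} (ha : 0 < a) (hlow : ∀ l, 0 ≤ l → a * l + b ≤ V l) :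
    ∃ l, 0 ≤ l ∧ IsMinOn V (Ici 0) l := by
  refine hV.exists_isMinOn' isClosed_Ici self_mem_Ici ?_
  rw [cocompact_eq_atBot_atTop, inf_sup_right, eventually_sup]
  constructor
  · filter_upwards [mem_inf_of_left (eventually_lt_atBot 0),
      mem_inf_of_right (mem_principal_self (Ici 0))] with l h₁ h₂
    exact absurd h₂ (not_le.2 h₁)
  · filter_upwards [mem_inf_of_left (eventually_ge_atTop ((V 0 - b) / a)),
      mem_inf_of_right (mem_principal_self (Ici 0))] with l h₁ h₂
    have := hlow l h₂
    rw [div_le_iff₀ ha] at h₁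
    linarith

theorem IsMinOn.nonneg_of_tendsto_slope_right {I : ℝ → ℝ} {ρ t₀ R : ℝ}
    (hmin : IsMinOn (fun t => t * ρ + I t) (Ici 0) t₀) (ht₀ : 0 ≤ t₀)
    (hR : Tendsto (fun s => (I (t₀ + s) - I t₀) / s) (𝓝[>] 0) (𝓝 R)) : 0 ≤ ρ + R := by
  refine ge_of_tendsto (hR.const_add ρ) ?_
  filter_upwards [self_mem_nhdsWithin] with s (hs : 0 < s)
  have h := isMinOn_iff.1 hmin (t₀ + s) (by simp only [mem_Ici]; linarith)
  have : -ρ ≤ (I (t₀ + s) - I t₀) / s := by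
    rw [le_div_iff₀ hs]
    linarith
  linarith

theorem IsMinOn.add_nonpos_of_tendsto_slope_left {I : ℝ → ℝ} {ρ t₀ L : ℝ}
    (hmin : IsMinOn (fun t => t * ρ + I t) (Ici 0) t₀) (ht₀ : 0 < t₀)
    (hL : Tendsto (fun s => (I (t₀ + s) - I t₀) / s) (𝓝[<] 0) (𝓝 L)) : ρ + L ≤ 0 := by
  refine le_of_tendsto (hL.const_add ρ) ?_
  filter_upwards [Ioo_mem_nhdsLT (neg_lt_zero.2 ht₀)] with s hs
  have h := isMinOn_iff.1 hmin (t₀ + s) (by simp only [mem_Ici]; linarith [hs.1])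
  have : (I (t₀ + s) - I t₀) / s ≤ -ρ := by
    rw [div_le_iff_of_neg hs.2]
    linarith
  linarith

theorem exists_mix_weight {a b ρ l : ℝ} (hl : 0 ≤ l) (ha : a ≤ ρ) (hb : 0 < l → ρ ≤ b) :
    ∃ θ, 0 ≤ θ ∧ θ ≤ 1 ∧ θ * a + (1 - θ) * b ≤ ρ ∧ l * (θ * a + (1 - θ) * b) = l * ρ := by
  rcases hl.eq_or_lt with rfl | hl
  · exact ⟨1, zero_le_one, le_rfl, by simpa using ha, by simp⟩
  rcases ha.eq_or_lt with rfl | ha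
  · exact ⟨1, zero_le_one, le_rfl, by simp, by simp⟩
  have hba : 0 < b - a := by linarith [hb hl]
  have hmix : (b - ρ) / (b - a) * a + (1 - (b - ρ) / (b - a)) * b = ρ := by
    field_simp
    ring
  exact ⟨(b - ρ) / (b - a), div_nonneg (by linarith [hb hl]) hba.le,
    (div_le_one hba).2 (by linarith), hmix.le, by rw [hmix]⟩

section PenalizedSup

variable {Y : Type*} [TopologicalSpace Y] {S : Set Y} {φ ψ : Y → ℝ}

theorem tendsto_sInf_add_mul_penalty (hS : IsCompact S) {w p : Y → ℝ} (hw : ContinuousOn w S)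
    (hp : ContinuousOn p S) (hp0 : ∀ y ∈ S, 0 ≤ p y) (hK : ∃ y ∈ S, p y = 0) :
    Tendsto (fun N : ℝ => sInf ((fun y => w y + N * p y) '' S)) atTop
      (𝓝 (sInf (w '' {y ∈ S | p y = 0}))) := by
  have hK_eq : {y ∈ S | p y = 0} = S ∩ p ⁻¹' Iic 0 := by
    ext y
    exact and_congr_right fun hy => (hp0 y hy).ge_iff_eq'.symm
  have hKc : IsCompact {y ∈ S | p y = 0} :=
    hK_eq ▸ hp.lowerSemicontinuousOn.isCompact_inter_preimage_Iic hS 0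
  obtain ⟨y₀, hy₀, hy₀min⟩ := hKc.exists_isMinOn hK (hw.mono (sep_subset _ _))
  have hval : sInf (w '' {y ∈ S | p y = 0}) = w y₀ :=
    (IsLeast.csInf_eq ⟨mem_image_of_mem w hy₀, forall_mem_image.2 hy₀min⟩)
  have hSne : S.Nonempty := ⟨y₀, hy₀.1⟩
  have hcont : ∀ N : ℝ, ContinuousOn (fun y => w y + N * p y) S :=
    fun N => hw.add (continuousOn_const.mul hp)
  rw [hval]
  refine tendsto_order.2 ⟨fun b hb => ?_, fun b hb => Eventually.of_forall fun N => ?_⟩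
  · -- on `S ∩ {w ≤ b}` the penalty is at least some `δ > 0`, so `N * p` lifts `w` above `b`
    obtain ⟨δ, hδ, hδp⟩ : ∃ δ, 0 < δ ∧ ∀ y ∈ S ∩ w ⁻¹' Iic b, δ ≤ p y := by
      refine (hw.lowerSemicontinuousOn.isCompact_inter_preimage_Iic hS b).exists_forall_le'
        (hp.mono inter_subset_left) fun y hy => (hp0 y hy.1).lt_of_ne fun h => ?_
      exact (hb.trans_le (hy₀min ⟨hy.1, h.symm⟩)).not_ge hy.2
    obtain ⟨m, hm⟩ := hS.bddBelow_image hw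
    filter_upwards [eventually_ge_atTop 0, eventually_gt_atTop ((b - m) / δ)] with N hN hNδ
    refine (hS.lt_sInf_iff_of_continuous hSne (hcont N) b).2 fun y hy => ?_
    have hmy : m ≤ w y := hm (mem_image_of_mem w hy)
    have hNp : 0 ≤ N * p y := mul_nonneg hN (hp0 y hy)
    by_cases hwy : w y ≤ b
    · have : δ * ((b - m) / δ) < δ * N := mul_lt_mul_of_pos_left hNδ hδ
      rw [mul_div_cancel₀ _ hδ.ne'] at this
      nlinarith [hδp y ⟨hy, hwy⟩]
    · linarith [not_le.1 hwy]
  · refine (csInf_le (hS.bddBelow_image (hcont N)) ⟨y₀, hy₀.1, ?_⟩).trans_lt hb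
    simp [hy₀.2]

noncomputable def penalizedSup (S : Set Y) (φ ψ : Y → ℝ) (l : ℝ) : ℝ :=
  sSup ((fun y => φ y - l * ψ y) '' S)

def penalizedArgmax (S : Set Y) (φ ψ : Y → ℝ) (l : ℝ) : Set Y :=
  {y ∈ S | φ y - l * ψ y = penalizedSup S φ ψ l}

variable (hS : IsCompact S) (hφ : ContinuousOn φ S) (hψ : ContinuousOn ψ S)
include hS hφ hψ

theorem le_penalizedSup {y : Y} (hy : y ∈ S) (l : ℝ) :
    φ y - l * ψ y ≤ penalizedSup S φ ψ l :=
  le_csSup (hS.bddAbove_image (hφ.sub (continuousOn_const.mul hψ))) (mem_image_of_mem _ hy)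

theorem exists_penalizedSup_eq (hne : S.Nonempty) (l : ℝ) :
    ∃ y ∈ S, φ y - l * ψ y = penalizedSup S φ ψ l :=
  (hS.image_of_continuousOn (hφ.sub (continuousOn_const.mul hψ))).sSup_mem (hne.image _)

theorem mem_penalizedArgmax_iff {l : ℝ} {y : Y} :
    y ∈ penalizedArgmax S φ ψ l ↔ y ∈ S ∧ ∀ z ∈ S, φ z - l * ψ z ≤ φ y - l * ψ y := by
  refine and_congr_right fun hy => ⟨fun h z hz => h ▸ le_penalizedSup hS hφ hψ hz l, fun h => ?_⟩
  exact (le_penalizedSup hS hφ hψ hy l).antisymm (csSup_le ⟨_, mem_image_of_mem _ hy⟩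
    (forall_mem_image.2 h))

theorem abs_penalizedSup_sub_le (hne : S.Nonempty) {C : ℝ} (hC : ∀ y ∈ S, |ψ y| ≤ C)
    (l m : ℝ) : |penalizedSup S φ ψ l - penalizedSup S φ ψ m| ≤ C * |l - m| := by
  have key : ∀ l m, penalizedSup S φ ψ l - penalizedSup S φ ψ m ≤ C * |l - m| := by
    intro l m
    obtain ⟨y, hy, hl⟩ := exists_penalizedSup_eq hS hφ hψ hne l
    have hm := le_penalizedSup hS hφ hψ hy m
    have : (m - l) * ψ y ≤ |l - m| * C :=
      (le_abs_self _).trans ((abs_mul _ _).trans_le (by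
        rw [abs_sub_comm]; exact mul_le_mul_of_nonneg_left (hC y hy) (abs_nonneg _)))
    linarith
  refine abs_sub_le_iff.2 ⟨key l m, ?_⟩
  rw [abs_sub_comm]
  exact key m l

theorem tendsto_penalizedSup_slope_right (hne : S.Nonempty) (l : ℝ) :
    Tendsto (fun s => (penalizedSup S φ ψ (l + s) - penalizedSup S φ ψ l) / s) (𝓝[>] 0)
      (𝓝 (-sInf (ψ '' penalizedArgmax S φ ψ l))) := by
  set g := penalizedSup S φ ψ l
  -- the slope is a penalized minimum of `ψ`, with penalty `s⁻¹ * (g - (φ - l * ψ))`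
  have hp : ContinuousOn (fun y => g - (φ y - l * ψ y)) S :=
    continuousOn_const.sub (hφ.sub (continuousOn_const.mul hψ))
  have hpen := tendsto_sInf_add_mul_penalty hS hψ hp
    (fun y hy => sub_nonneg.2 (le_penalizedSup hS hφ hψ hy l))
    (by
      obtain ⟨y, hy, h⟩ := exists_penalizedSup_eq hS hφ hψ hne l
      exact ⟨y, hy, sub_eq_zero.2 h.symm⟩)
  have hzero : {y ∈ S | g - (φ y - l * ψ y) = 0} = penalizedArgmax S φ ψ l := by
    simp only [penalizedArgmax, sub_eq_zero, eq_comm, g]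
  rw [hzero] at hpen
  refine (hpen.comp tendsto_inv_nhdsGT_zero).neg.congr' ?_
  filter_upwards [self_mem_nhdsWithin] with s (hs : 0 < s)
  have hbdd : BddAbove ((fun y => φ y - (l + s) * ψ y) '' S) :=
    hS.bddAbove_image (hφ.sub (continuousOn_const.mul hψ))
  have hanti : Antitone fun t : ℝ => s⁻¹ * (g - t) := fun a b hab => by
    have := inv_pos.2 hs
    nlinarith
  have himage : (fun y => ψ y + s⁻¹ * (g - (φ y - l * ψ y))) '' S
      = (fun t => s⁻¹ * (g - t)) '' ((fun y => φ y - (l + s) * ψ y) '' S) := by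
    rw [image_image]
    refine image_congr fun y _ => ?_
    field_simp
    ring
  simp only [Function.comp_apply]
  rw [himage, ← hanti.map_csSup_of_continuousAt (by fun_prop) (hne.image _) hbdd]
  unfold penalizedSup
  field_simp
  ring

theorem tendsto_penalizedSup_slope_left (hne : S.Nonempty) (l : ℝ) :
    Tendsto (fun s => (penalizedSup S φ ψ (l + s) - penalizedSup S φ ψ l) / s) (𝓝[<] 0)
      (𝓝 (-sSup (ψ '' penalizedArgmax S φ ψ l))) := by
  have hrefl : ∀ t, penalizedSup S φ ψ t = penalizedSup S φ (-ψ) (-t) := fun t => by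
    simp only [penalizedSup, Pi.neg_apply, neg_mul_neg]
  have hneg : Tendsto Neg.neg (𝓝[<] (0 : ℝ)) (𝓝[>] 0) := by
    simpa using tendsto_neg_nhdsLT (a := (0 : ℝ))
  have h := (tendsto_penalizedSup_slope_right hS hφ hψ.neg hne (-l)).comp hneg
  refine h.neg.congr' (Eventually.of_forall fun s => ?_) |>.trans_eq ?_
  · simp only [Function.comp_apply, hrefl, neg_add, div_neg, neg_neg]
  · simp only [penalizedArgmax, ← hrefl, Pi.neg_apply, neg_mul_neg, neg_neg]
    rw [← image_image Neg.neg ψ, image_neg_eq_neg, Real.sInf_neg]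

end PenalizedSup

section Caratheodory

variable {X E : Type*} [MeasurableSpace X] [TopologicalSpace E]

def IsCaratheodory (w : X → E → ℝ) : Prop :=
  (∀ y, Measurable fun x => w x y) ∧ ∀ x, Continuous (w x)

theorem IsCaratheodory.measurable_sInf_image [SecondCountableTopology E] {w : X → E → ℝ}
    (hw : IsCaratheodory w) {S : Set E} (hS : IsCompact S) :
    Measurable fun x => sInf (w x '' S) := by
  rcases S.eq_empty_or_nonempty with rfl | hne
  · simp
  obtain ⟨D, hDc, hDd⟩ := TopologicalSpace.exists_countable_dense S
  refine measurable_of_Iio fun t => ?_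
  have hpre : (fun x => sInf (w x '' S)) ⁻¹' Iio t = ⋃ y ∈ D, {x | w x y < t} := by
    ext x
    simp only [mem_preimage, mem_Iio, mem_iUnion, mem_ofPred_eq, exists_prop,
      csInf_lt_iff (hS.bddBelow_image (hw.2 x).continuousOn) (hne.image _), exists_mem_image]
    constructor
    · rintro ⟨y, hy, hyt⟩
      obtain ⟨z, hz, hzD⟩ := hDd.exists_mem_open
        ((isOpen_Iio.preimage (hw.2 x)).preimage continuous_subtype_val) ⟨⟨y, hy⟩, hyt⟩
      exact ⟨z, hz, hzD⟩
    · rintro ⟨z, hzD, hz⟩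
      exact ⟨z, z.2, hz⟩
  rw [hpre]
  exact MeasurableSet.biUnion hDc fun y _ => measurableSet_lt (hw.1 y) measurable_const

theorem IsCaratheodory.measurable_sInf_image_zeroSet [SecondCountableTopology E]
    {w p : X → E → ℝ} (hw : IsCaratheodory w) (hp : IsCaratheodory p) (hp0 : ∀ x y, 0 ≤ p x y)
    {S : Set E} (hS : IsCompact S) (hK : ∀ x, ∃ y ∈ S, p x y = 0) :
    Measurable fun x => sInf (w x '' {y ∈ S | p x y = 0}) := by
  refine measurable_of_tendsto_metrizable' atTop (fun N : ℝ =>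
    (IsCaratheodory.measurable_sInf_image (w := fun x y => w x y + N * p x y) ?_ hS))
    (tendsto_pi_nhds.2 fun x => tendsto_sInf_add_mul_penalty hS (hw.2 x).continuousOn
      (hp.2 x).continuousOn (fun y _ => hp0 x y) (hK x))
  exact ⟨fun y => (hw.1 y).add (measurable_const.mul (hp.1 y)),
    fun x => (hw.2 x).add (continuous_const.mul (hp.2 x))⟩

end Caratheodory

section LexArgmin

variable {X E : Type*}

def lexArgminSet (S : Set E) (w : ℕ → X → E → ℝ) : ℕ → X → Set E
  | 0, _ => S
  | n + 1, x => {y ∈ lexArgminSet S w n x | ∀ z ∈ lexArgminSet S w n x, w n x y ≤ w n x z}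

variable {S : Set E} {w : ℕ → X → E → ℝ}

theorem lexArgminSet_antitone (x : X) : Antitone fun n => lexArgminSet S w n x :=
  antitone_nat_of_succ_le fun _ _ hy => hy.1

theorem lexArgminSet_congr {w' : ℕ → X → E → ℝ} {n : ℕ} (h : ∀ k < n, w k = w' k) :
    lexArgminSet S w n = lexArgminSet S w' n := by
  induction n with
  | zero => rfl
  | succ n ih =>
    funext x
    simp only [lexArgminSet, ih fun k hk => h k (hk.trans n.lt_succ_self), h n n.lt_succ_self]

variable [TopologicalSpace E] (hS : IsCompact S) (hw : ∀ n x, Continuous (w n x))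
include hS hw

theorem isCompact_lexArgminSet (n : ℕ) (x : X) : IsCompact (lexArgminSet S w n x) := by
  induction n with
  | zero => exact hS
  | succ n ih =>
    have hclosed : IsClosed {y | ∀ z ∈ lexArgminSet S w n x, w n x y ≤ w n x z} := by
      simp only [ofPred_forall]
      exact isClosed_biInter fun z _ => isClosed_le (hw n x) continuous_const
    exact ih.inter_right hclosed

theorem lexArgminSet_nonempty (hne : S.Nonempty) (n : ℕ) (x : X) :
    (lexArgminSet S w n x).Nonempty := by
  induction n with
  | zero => exact hne
  | succ n ih =>
    obtain ⟨y, hy, hmin⟩ :=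
      (isCompact_lexArgminSet hS hw n x).exists_isMinOn ih (hw n x).continuousOn
    exact ⟨y, hy, fun z hz => hmin hz⟩

end LexArgmin

section LexArgminMeasurable

variable {X E : Type*} [MeasurableSpace X] [TopologicalSpace E] [SecondCountableTopology E]
  {S : Set E} {w : ℕ → X → E → ℝ} (hS : IsCompact S) (hne : S.Nonempty)
  (hw : ∀ n, IsCaratheodory (w n))
include hS hne hw

theorem measurable_sInf_image_lexArgminSet_of_penalty {n : ℕ} {v p : X → E → ℝ}
    (hv : IsCaratheodory v) (hp : IsCaratheodory p) (hp0 : ∀ x y, 0 ≤ p x y)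
    (hpK : ∀ x, lexArgminSet S w n x = {y ∈ S | p x y = 0}) :
    Measurable fun x => sInf (v x '' lexArgminSet S w n x) := by
  simp only [hpK]
  refine hv.measurable_sInf_image_zeroSet hp hp0 hS fun x => ?_
  obtain ⟨y, hy⟩ := hpK x ▸ lexArgminSet_nonempty hS (fun k => (hw k).2) hne n x
  exact ⟨y, hy⟩

theorem exists_lexArgminSet_eq_zeroSet (n : ℕ) :
    ∃ p : X → E → ℝ, IsCaratheodory p ∧ (∀ x y, 0 ≤ p x y) ∧
      ∀ x, lexArgminSet S w n x = {y ∈ S | p x y = 0} := by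
  induction n with
  | zero =>
    exact ⟨fun _ _ => 0, ⟨fun _ => measurable_const, fun _ => continuous_const⟩,
      fun _ _ => le_rfl, fun x => by simp [lexArgminSet]⟩
  | succ n ih =>
    obtain ⟨p, hp, hp0, hpK⟩ := ih
    set v := fun x => sInf (w n x '' lexArgminSet S w n x) with hv_def
    have hv : Measurable v :=
      measurable_sInf_image_lexArgminSet_of_penalty hS hne hw (hw n) hp hp0 hpK
    refine ⟨fun x y => p x y + max (w n x y - v x) 0,
      ⟨fun y => (hp.1 y).add ((((hw n).1 y).sub hv).max measurable_const),
        fun x => (hp.2 x).add ((((hw n).2 x).sub continuous_const).max continuous_const)⟩,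
      fun x y => add_nonneg (hp0 x y) (le_max_right _ _), fun x => ?_⟩
    have hK := isCompact_lexArgminSet hS (fun k => (hw k).2) n x
    have hKne := lexArgminSet_nonempty hS (fun k => (hw k).2) hne n x
    ext y
    simp only [lexArgminSet, mem_ofPred_eq,
      add_eq_zero_iff_of_nonneg (hp0 x y) (le_max_right _ _), max_eq_right_iff, sub_nonpos]
    rw [hpK x] at hK hKne ⊢
    simp only [hv_def, hpK x]
    rw [le_csInf_iff (hK.bddBelow_image ((hw n).2 x).continuousOn) (hKne.image _),
      forall_mem_image]
    simp only [mem_ofPred_eq, and_assoc]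

theorem measurable_sInf_image_lexArgminSet (n : ℕ) :
    Measurable fun x => sInf (w n x '' lexArgminSet S w n x) :=
  let ⟨_, hp, hp0, hpK⟩ := exists_lexArgminSet_eq_zeroSet hS hne hw n
  measurable_sInf_image_lexArgminSet_of_penalty hS hne hw (hw n) hp hp0 hpK

end LexArgminMeasurable

theorem exists_measurable_forall_mem_lexArgminSet {X : Type*} [MeasurableSpace X] {d : ℕ}
    {S : Set (EuclideanSpace ℝ (Fin d))} (hS : IsCompact S) (hne : S.Nonempty)
    {w : ℕ → X → EuclideanSpace ℝ (Fin d) → ℝ} (hw : ∀ n, IsCaratheodory (w n)) (n : ℕ) :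
    ∃ T : X → EuclideanSpace ℝ (Fin d), Measurable T ∧ ∀ x, T x ∈ lexArgminSet S w n x := by
  -- after the `n` given criteria, minimize the coordinates one by one: this pins down a point
  set w' : ℕ → X → EuclideanSpace ℝ (Fin d) → ℝ := fun k x y =>
    if k < n then w k x y else if h : k - n < d then y ⟨k - n, h⟩ else 0 with hw'_def
  have hw' : ∀ k, IsCaratheodory (w' k) := by
    intro k
    by_cases hk : k < n
    · simpa only [hw'_def, hk, if_true] using hw k
    by_cases hkd : k - n < d
    · simp only [hw'_def, hk, hkd, if_false, dif_pos]
      exact ⟨fun _ => measurable_const, fun _ => by fun_prop⟩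
    · simp only [hw'_def, hk, hkd, if_false, dif_neg, not_false_eq_true]
      exact ⟨fun _ => measurable_const, fun _ => continuous_const⟩
  have hcoord : ∀ (i : Fin d) x y, w' (n + i) x y = y i := by
    intro i x y
    simp [hw'_def]
  set T : X → EuclideanSpace ℝ (Fin d) := fun x =>
    WithLp.toLp 2 fun i => sInf (w' (n + i) x '' lexArgminSet S w' (n + i) x)
  have hpin : ∀ x, ∀ y ∈ lexArgminSet S w' (n + d) x, y = T x := by
    intro x y hy
    ext i
    have hy' : y ∈ lexArgminSet S w' (n + i + 1) x := lexArgminSet_antitone x (by omega) hy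
    have hleast : IsLeast (w' (n + i) x '' lexArgminSet S w' (n + i) x) (y i) :=
      hcoord i x y ▸ ⟨mem_image_of_mem _ hy'.1, forall_mem_image.2 hy'.2⟩
    simp [T, hleast.csInf_eq]
  refine ⟨T, (WithLp.measurable_toLp 2 _).comp (measurable_pi_lambda _ fun i =>
    measurable_sInf_image_lexArgminSet hS hne hw' (n + i)), fun x => ?_⟩
  obtain ⟨y, hy⟩ := lexArgminSet_nonempty hS (fun k => (hw' k).2) hne (n + d) x
  rw [lexArgminSet_congr (w' := w') fun k hk => by simp [hw'_def, hk]]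
  exact lexArgminSet_antitone x (Nat.le_add_right n d) (hpin x y hy ▸ hy)

theorem exists_measurable_mem_penalizedArgmax_isMinOn {X : Type*} [TopologicalSpace X]
    [MeasurableSpace X] [OpensMeasurableSpace X] {d : ℕ} {S : Set (EuclideanSpace ℝ (Fin d))}
    (hS : IsCompact S) (hne : S.Nonempty) {f : EuclideanSpace ℝ (Fin d) → ℝ} (hf : Continuous f)
    {c : X × EuclideanSpace ℝ (Fin d) → ℝ} (hc : Continuous c) (l : ℝ)
    {u : X → EuclideanSpace ℝ (Fin d) → ℝ} (hu : IsCaratheodory u) :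
    ∃ T : X → EuclideanSpace ℝ (Fin d), Measurable T ∧ ∀ x,
      T x ∈ penalizedArgmax S f (fun y => c (x, y)) l ∧
        IsMinOn (u x) (penalizedArgmax S f (fun y => c (x, y)) l) (T x) := by
  set w : ℕ → X → EuclideanSpace ℝ (Fin d) → ℝ :=
    fun k => if k = 0 then fun x y => l * c (x, y) - f y else u with hw_def
  have hw : ∀ k, IsCaratheodory (w k) := by
    intro k
    by_cases hk : k = 0
    · simp only [hw_def, hk, if_true]
      exact ⟨fun y => (by fun_prop : Continuous fun x => l * c (x, y) - f y).measurable,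
        fun x => by fun_prop⟩
    · simpa only [hw_def, hk, if_false] using hu
  have hK : ∀ x, lexArgminSet S w 1 x = penalizedArgmax S f (fun y => c (x, y)) l := by
    intro x
    ext y
    rw [mem_penalizedArgmax_iff hS hf.continuousOn (by fun_prop)]
    simp only [lexArgminSet, hw_def, if_true, mem_ofPred_eq]
    exact and_congr_right fun _ => forall₂_congr fun z _ => by constructor <;> intro h <;> linarith
  obtain ⟨T, hT, hTw⟩ := exists_measurable_forall_mem_lexArgminSet hS hne hw 2
  refine ⟨T, hT, fun x => ?_⟩
  obtain ⟨hT₁, hT₂⟩ := hTw x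
  rw [← hK x]
  exact ⟨hT₁, fun z hz => by simpa [hw_def] using hT₂ z hz⟩

section Coupling

variable {E : Type*} [MeasurableSpace E] {S : Set E} {P : Measure E}

def IsCouplingOn (S : Set E) (P : Measure E) (π : Measure (E × E)) : Prop :=
  IsProbabilityMeasure π ∧ π (S ×ˢ S) = 1 ∧ π.fst = P

theorem IsCouplingOn.mix {π₁ π₂ : Measure (E × E)} (h₁ : IsCouplingOn S P π₁)
    (h₂ : IsCouplingOn S P π₂) {θ : ℝ} (hθ₀ : 0 ≤ θ) (hθ₁ : θ ≤ 1) :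
    IsCouplingOn S P (ENNReal.ofReal θ • π₁ + ENNReal.ofReal (1 - θ) • π₂) := by
  have hsum : ENNReal.ofReal θ + ENNReal.ofReal (1 - θ) = 1 := by
    rw [← ENNReal.ofReal_add hθ₀ (sub_nonneg.2 hθ₁)]
    simp
  have := h₁.1
  have := h₂.1
  refine ⟨⟨by simp [hsum]⟩, by simp [h₁.2.1, h₂.2.1, hsum], ?_⟩
  have hfst : ∀ (r : ENNReal) (π : Measure (E × E)), (r • π).fst = r • π.fst :=
    fun r π => Measure.map_smul r π Prod.fst
  rw [Measure.fst_add, hfst, hfst, h₁.2.2, h₂.2.2, ← add_smul, hsum, one_smul]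

end Coupling

section DualProblem

variable {E : Type*} [TopologicalSpace E] {S : Set E} {f : E → ℝ} {c : E × E → ℝ}

theorem continuous_penalizedSup_section (hS : IsCompact S) (hf : Continuous f)
    (hc : Continuous c) (l : ℝ) : Continuous fun x => penalizedSup S f (fun y => c (x, y)) l :=
  hS.continuous_sSup (f := fun x y => f y - l * c (x, y)) (by fun_prop)

variable [MeasurableSpace E] {P : Measure E} {ρ : ℝ}

noncomputable def dualObjective (S : Set E) (P : Measure E) (f : E → ℝ) (c : E × E → ℝ)
    (ρ l : ℝ) : ℝ :=
  l * ρ + ∫ x, penalizedSup S f (fun y => c (x, y)) l ∂P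

def primalValues (S : Set E) (P : Measure E) (f : E → ℝ) (c : E × E → ℝ) (ρ : ℝ) : Set ℝ :=
  {r | ∃ π, IsCouplingOn S P π ∧ ∫ z, c z ∂π ≤ ρ ∧ r = ∫ z, f z.2 ∂π}

theorem exists_ae_abs_penalizedSup_section_sub_le (hS : IsCompact S) (hne : S.Nonempty)
    (hP : ∀ᵐ x ∂P, x ∈ S) (hf : Continuous f) (hc : Continuous c) :
    ∃ C, ∀ᵐ x ∂P, ∀ l m, |penalizedSup S f (fun y => c (x, y)) l
      - penalizedSup S f (fun y => c (x, y)) m| ≤ C * |l - m| := by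
  obtain ⟨C, hC⟩ := (hS.prod hS).exists_bound_of_continuousOn hc.continuousOn
  refine ⟨C, hP.mono fun x hx l m => ?_⟩
  exact abs_penalizedSup_sub_le (ψ := fun y => c (x, y)) hS hf.continuousOn (by fun_prop) hne
    (fun y hy => hC (x, y) ⟨hx, hy⟩) l m

variable [T2Space E] [OpensMeasurableSpace E]

theorem integrable_penalizedSup_section [IsFiniteMeasure P] (hS : IsCompact S)
    (hP : ∀ᵐ x ∂P, x ∈ S) (hf : Continuous f) (hc : Continuous c) (l : ℝ) :
    Integrable (fun x => penalizedSup S f (fun y => c (x, y)) l) P :=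
  integrable_of_continuousOn_of_ae_mem hS hP
    (continuous_penalizedSup_section hS hf hc l).continuousOn

theorem continuous_dualObjective [IsProbabilityMeasure P] (hS : IsCompact S) (hne : S.Nonempty)
    (hP : ∀ᵐ x ∂P, x ∈ S) (hf : Continuous f) (hc : Continuous c) :
    Continuous (dualObjective S P f c ρ) := by
  obtain ⟨C, hC⟩ := exists_ae_abs_penalizedSup_section_sub_le hS hne hP hf hc
  have hlip := LipschitzWith.of_dist_le'
    (f := fun l => ∫ x, penalizedSup S f (fun y => c (x, y)) l ∂P) fun l m => by
      simpa only [Real.dist_eq] using abs_integral_sub_le_of_ae_lipschitz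
        (integrable_penalizedSup_section hS hP hf hc) hC l m
  exact (continuous_id.mul continuous_const).add hlip.continuous

theorem affine_le_dualObjective [IsProbabilityMeasure P] (hS : IsCompact S)
    (hP : ∀ᵐ x ∂P, x ∈ S) (hf : Continuous f) (hc : Continuous c)
    (hdiag : ∀ x ∈ S, c (x, x) = 0) (l : ℝ) :
    ρ * l + ∫ x, f x ∂P ≤ dualObjective S P f c ρ l := by
  have hle : ∫ x, f x ∂P ≤ ∫ x, penalizedSup S f (fun y => c (x, y)) l ∂P := by
    refine integral_mono_ae (integrable_of_continuousOn_of_ae_mem hS hP hf.continuousOn)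
      (integrable_penalizedSup_section hS hP hf hc l) (hP.mono fun x hx => ?_)
    simpa [hdiag x hx] using
      le_penalizedSup (ψ := fun y => c (x, y)) hS hf.continuousOn (by fun_prop) hx l
  rw [dualObjective]
  linarith

theorem exists_isMinOn_dualObjective [IsProbabilityMeasure P] (hS : IsCompact S)
    (hne : S.Nonempty) (hP : ∀ᵐ x ∂P, x ∈ S) (hf : Continuous f) (hc : Continuous c)
    (hdiag : ∀ x ∈ S, c (x, x) = 0) (hρ : 0 < ρ) :
    ∃ l, 0 ≤ l ∧ IsMinOn (dualObjective S P f c ρ) (Ici 0) l :=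
  (continuous_dualObjective hS hne hP hf hc).continuousOn.exists_isMinOn_Ici_of_affine_le hρ
    fun l _ => affine_le_dualObjective hS hP hf hc hdiag l

theorem integral_sInf_le_of_isMinOn [IsProbabilityMeasure P] (hS : IsCompact S)
    (hne : S.Nonempty) (hP : ∀ᵐ x ∂P, x ∈ S) (hf : Continuous f) (hc : Continuous c) {l : ℝ}
    (hmin : IsMinOn (dualObjective S P f c ρ) (Ici 0) l) (hl : 0 ≤ l) :
    ∫ x, sInf ((fun y => c (x, y)) '' penalizedArgmax S f (fun y => c (x, y)) l) ∂P ≤ ρ := by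
  obtain ⟨C, hC⟩ := exists_ae_abs_penalizedSup_section_sub_le hS hne hP hf hc
  have := hmin.nonneg_of_tendsto_slope_right hl <| tendsto_integral_slope (L := 𝓝[>] 0)
    (eventually_nhdsWithin_of_forall fun s (hs : 0 < s) => hs.ne')
    (integrable_penalizedSup_section hS hP hf hc) hC (Eventually.of_forall fun x =>
      tendsto_penalizedSup_slope_right hS hf.continuousOn (by fun_prop) hne l)
  rw [integral_neg] at this
  linarith

theorem le_integral_sSup_of_isMinOn [IsProbabilityMeasure P] (hS : IsCompact S)
    (hne : S.Nonempty) (hP : ∀ᵐ x ∂P, x ∈ S) (hf : Continuous f) (hc : Continuous c) {l : ℝ}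
    (hmin : IsMinOn (dualObjective S P f c ρ) (Ici 0) l) (hl : 0 < l) :
    ρ ≤ ∫ x, sSup ((fun y => c (x, y)) '' penalizedArgmax S f (fun y => c (x, y)) l) ∂P := by
  obtain ⟨C, hC⟩ := exists_ae_abs_penalizedSup_section_sub_le hS hne hP hf hc
  have := hmin.add_nonpos_of_tendsto_slope_left hl <| tendsto_integral_slope (L := 𝓝[<] 0)
    (eventually_nhdsWithin_of_forall fun s (hs : s < 0) => hs.ne)
    (integrable_penalizedSup_section hS hP hf hc) hC (Eventually.of_forall fun x =>
      tendsto_penalizedSup_slope_left hS hf.continuousOn (by fun_prop) hne l)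
  rw [integral_neg] at this
  linarith

variable [SecondCountableTopology E]

theorem IsCouplingOn.ae_mem (hS : IsCompact S) {π : Measure (E × E)} (hπ : IsCouplingOn S P π) :
    ∀ᵐ z ∂π, z ∈ S ×ˢ S :=
  have := hπ.1
  (mem_ae_iff_prob_eq_one (hS.prod hS).isClosed.measurableSet).2 hπ.2.1

theorem IsCouplingOn.integrable (hS : IsCompact S) {π : Measure (E × E)}
    (hπ : IsCouplingOn S P π) {φ : E × E → ℝ} (hφ : Continuous φ) : Integrable φ π :=
  have := hπ.1
  integrable_of_continuousOn_of_ae_mem (hS.prod hS) (hπ.ae_mem hS) hφ.continuousOn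

theorem integral_le_dualObjective (hS : IsCompact S) (hf : Continuous f) (hc : Continuous c)
    {π : Measure (E × E)} (hπ : IsCouplingOn S P π) (hcost : ∫ z, c z ∂π ≤ ρ) {l : ℝ}
    (hl : 0 ≤ l) : ∫ z, f z.2 ∂π ≤ dualObjective S P f c ρ l := by
  set g := fun x => penalizedSup S f (fun y => c (x, y)) l
  have hg : Continuous g := continuous_penalizedSup_section hS hf hc l
  have hg_int : Integrable (fun z : E × E => g z.1) π := hπ.integrable hS (by fun_prop)
  have hc_int : Integrable c π := hπ.integrable hS hc
  have hmarg : ∫ z, g z.1 ∂π = ∫ x, g x ∂P := by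
    rw [← hπ.2.2, Measure.fst, integral_map measurable_fst.aemeasurable hg.aestronglyMeasurable]
  calc ∫ z, f z.2 ∂π ≤ ∫ z, (g z.1 + l * c z) ∂π := by
        refine integral_mono_ae (hπ.integrable hS (by fun_prop))
          (hg_int.add (hc_int.const_mul l)) ((hπ.ae_mem hS).mono fun z hz => ?_)
        have := le_penalizedSup (ψ := fun y => c (z.1, y)) hS hf.continuousOn (by fun_prop) hz.2 l
        linarith
    _ = ∫ x, g x ∂P + l * ∫ z, c z ∂π := by
        rw [integral_add hg_int (hc_int.const_mul l), integral_const_mul, hmarg]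
    _ ≤ dualObjective S P f c ρ l := by
        rw [dualObjective]
        nlinarith

theorem isCouplingOn_map_graph [IsProbabilityMeasure P] (hS : IsCompact S) (hP : P S = 1)
    {T : E → E} (hT : Measurable T) (hTS : ∀ x, T x ∈ S) :
    IsCouplingOn S P (P.map fun x => (x, T x)) := by
  have hgraph : Measurable fun x => (x, T x) := measurable_id.prodMk hT
  refine ⟨Measure.isProbabilityMeasure_map hgraph.aemeasurable, ?_, ?_⟩
  · rw [Measure.map_apply hgraph (hS.prod hS).isClosed.measurableSet]
    convert hP using 2
    ext x
    simp [hTS x]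
  · rw [Measure.fst_map_prodMk hT, Measure.map_id']

theorem integral_map_graph_of_mem_penalizedArgmax [IsProbabilityMeasure P] (hS : IsCompact S)
    (hP : P S = 1) (hf : Continuous f) (hc : Continuous c) {l : ℝ} {T : E → E}
    (hT : Measurable T) (hTS : ∀ x, T x ∈ penalizedArgmax S f (fun y => c (x, y)) l) :
    ∫ z, f z.2 ∂(P.map fun x => (x, T x))
      = ∫ x, penalizedSup S f (fun y => c (x, y)) l ∂P
        + l * ∫ z, c z ∂(P.map fun x => (x, T x)) := by
  have hgraph : AEMeasurable (fun x => (x, T x)) P := (measurable_id.prodMk hT).aemeasurable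
  have hc_int : Integrable (fun x => c (x, T x)) P :=
    (integrable_map_measure hc.aestronglyMeasurable hgraph).1
      ((isCouplingOn_map_graph hS hP hT fun x => (hTS x).1).integrable hS hc)
  have hPS : ∀ᵐ x ∂P, x ∈ S := (mem_ae_iff_prob_eq_one hS.isClosed.measurableSet).2 hP
  have hfs : Continuous fun z : E × E => f z.2 := by fun_prop
  rw [integral_map hgraph hfs.aestronglyMeasurable,
    integral_map hgraph hc.aestronglyMeasurable,
    ← integral_const_mul, ← integral_add (integrable_penalizedSup_section hS hPS hf hc l)
      (hc_int.const_mul l)]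
  refine integral_congr_ae (Eventually.of_forall fun x => ?_)
  have := (hTS x).2
  simp only at this ⊢
  linarith

end DualProblem

section Euclidean

variable {d : ℕ} {S : Set (EuclideanSpace ℝ (Fin d))} {P : Measure (EuclideanSpace ℝ (Fin d))}
  {f : EuclideanSpace ℝ (Fin d) → ℝ}
  {c : EuclideanSpace ℝ (Fin d) × EuclideanSpace ℝ (Fin d) → ℝ} {ρ : ℝ}

theorem exists_isCouplingOn_integral_eq_dualObjective [IsProbabilityMeasure P]
    (hS : IsCompact S) (hP : P S = 1) (hf : Continuous f) (hc : Continuous c) {l : ℝ}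
    (hl : 0 ≤ l) (hmin : IsMinOn (dualObjective S P f c ρ) (Ici 0) l) :
    ∃ π, IsCouplingOn S P π ∧ ∫ z, c z ∂π ≤ ρ ∧ ∫ z, f z.2 ∂π = dualObjective S P f c ρ l := by
  have hPS : ∀ᵐ x ∂P, x ∈ S := (mem_ae_iff_prob_eq_one hS.isClosed.measurableSet).2 hP
  have hne : S.Nonempty := nonempty_of_measure_ne_zero (hP ▸ one_ne_zero)
  -- two optimal transport maps: one of least cost, one of largest cost among the maximizers
  obtain ⟨T₁, hT₁, hT₁S⟩ := exists_measurable_mem_penalizedArgmax_isMinOn hS hne hf hc l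
    (u := fun x y => c (x, y)) ⟨fun y => by fun_prop, fun x => by fun_prop⟩
  obtain ⟨T₂, hT₂, hT₂S⟩ := exists_measurable_mem_penalizedArgmax_isMinOn hS hne hf hc l
    (u := fun x y => -c (x, y)) ⟨fun y => by fun_prop, fun x => by fun_prop⟩
  have hπ₁ := isCouplingOn_map_graph hS hP hT₁ fun x => (hT₁S x).1.1
  have hπ₂ := isCouplingOn_map_graph hS hP hT₂ fun x => (hT₂S x).1.1
  have hgraph : ∀ {T : EuclideanSpace ℝ (Fin d) → EuclideanSpace ℝ (Fin d)}, Measurable T →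
      ∫ z, c z ∂(P.map fun x => (x, T x)) = ∫ x, c (x, T x) ∂P :=
    fun hT => integral_map (measurable_id.prodMk hT).aemeasurable hc.aestronglyMeasurable
  have ha : ∫ z, c z ∂(P.map fun x => (x, T₁ x)) ≤ ρ := by
    refine (hgraph hT₁).trans_le (le_of_eq_of_le (integral_congr_ae (Eventually.of_forall
      fun x => ?_)) (integral_sInf_le_of_isMinOn hS hne hPS hf hc hmin hl))
    exact (IsLeast.csInf_eq ⟨mem_image_of_mem _ (hT₁S x).1,
      forall_mem_image.2 (isMinOn_iff.1 (hT₁S x).2)⟩).symm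
  have hb : 0 < l → ρ ≤ ∫ z, c z ∂(P.map fun x => (x, T₂ x)) := fun hl' => by
    refine ((le_integral_sSup_of_isMinOn hS hne hPS hf hc hmin hl').trans_eq
      (integral_congr_ae (Eventually.of_forall fun x => ?_))).trans_eq (hgraph hT₂).symm
    refine IsGreatest.csSup_eq ⟨mem_image_of_mem _ (hT₂S x).1, forall_mem_image.2 fun z hz => ?_⟩
    exact neg_le_neg_iff.1 ((hT₂S x).2 hz)
  obtain ⟨θ, hθ₀, hθ₁, hcost, hslack⟩ := exists_mix_weight hl ha hb
  refine ⟨_, hπ₁.mix hπ₂ hθ₀ hθ₁, ?_, ?_⟩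
  · rwa [integral_mix (hπ₁.integrable hS hc) (hπ₂.integrable hS hc) hθ₀ hθ₁]
  · rw [integral_mix (hπ₁.integrable hS (by fun_prop)) (hπ₂.integrable hS (by fun_prop)) hθ₀ hθ₁,
      integral_map_graph_of_mem_penalizedArgmax hS hP hf hc hT₁ fun x => (hT₁S x).1,
      integral_map_graph_of_mem_penalizedArgmax hS hP hf hc hT₂ fun x => (hT₂S x).1, dualObjective]
    linear_combination hslack

theorem exists_isGreatest_primalValues_isLeast_image_dualObjective [IsProbabilityMeasure P]
    (hS : IsCompact S) (hP : P S = 1) (hf : Continuous f) (hc : Continuous c)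
    (hdiag : ∀ x ∈ S, c (x, x) = 0) (hρ : 0 < ρ) : ∃ V,
      IsGreatest (primalValues S P f c ρ) V ∧ IsLeast (dualObjective S P f c ρ '' Ici 0) V := by
  have hPS : ∀ᵐ x ∂P, x ∈ S := (mem_ae_iff_prob_eq_one hS.isClosed.measurableSet).2 hP
  have hne : S.Nonempty := nonempty_of_measure_ne_zero (hP ▸ one_ne_zero)
  obtain ⟨l, hl, hmin⟩ := exists_isMinOn_dualObjective hS hne hPS hf hc hdiag hρ
  obtain ⟨π, hπ, hcost, hval⟩ :=
    exists_isCouplingOn_integral_eq_dualObjective hS hP hf hc hl hmin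
  refine ⟨dualObjective S P f c ρ l, ⟨⟨π, hπ, hcost, hval.symm⟩, ?_⟩,
    ⟨mem_image_of_mem _ hl, ?_⟩⟩
  · rintro r ⟨π', hπ', hcost', rfl⟩
    exact integral_le_dualObjective hS hf hc hπ' hcost' hl
  · rintro r ⟨l', hl', rfl⟩
    exact hmin hl'

end Euclidean

section Reduction

variable {E : Type*} [MeasurableSpace E] {S : Set E} {P : Measure E} {f f' : E → ℝ}
  {c c' : E × E → ℝ} {ρ : ℝ}

theorem setOf_eq_image_dualObjective (hP : ∀ᵐ x ∂P, x ∈ S) (hf : EqOn f' f S)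
    (hc : EqOn c' c (S ×ˢ S)) :
    {r : ℝ | ∃ lam : ℝ, 0 ≤ lam ∧
        r = lam * ρ + ∫ x, sSup ((fun y => f y - lam * c (x, y)) '' S) ∂P}
      = dualObjective S P f' c' ρ '' Ici 0 := by
  ext r
  simp only [mem_ofPred_eq, mem_image, mem_Ici, dualObjective, penalizedSup, eq_comm (a := r)]
  refine exists_congr fun l => and_congr_right fun _ => ?_
  rw [integral_congr_ae (hP.mono fun x hx => congrArg sSup (image_congr fun y hy => by
    rw [← hf hy, ← hc ⟨hx, hy⟩]))]

variable [TopologicalSpace E] [T2Space E] [SecondCountableTopology E] [OpensMeasurableSpace E]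

theorem setOf_eq_primalValues (hS : IsCompact S) (hf : EqOn f' f S) (hc : EqOn c' c (S ×ˢ S)) :
    {r : ℝ | ∃ π : Measure (E × E), IsProbabilityMeasure π ∧ π (S ×ˢ S) = 1 ∧ π.fst = P ∧
        (∫ z, c z ∂π) ≤ ρ ∧ r = ∫ z, f z.2 ∂π}
      = primalValues S P f' c' ρ := by
  ext r
  simp only [primalValues, mem_ofPred_eq, IsCouplingOn, and_assoc]
  refine exists_congr fun π => ⟨fun ⟨h₁, h₂, h₃, h₄, h₅⟩ => ?_, fun ⟨h₁, h₂, h₃, h₄, h₅⟩ => ?_⟩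
  all_goals
    have hae := IsCouplingOn.ae_mem hS ⟨h₁, h₂, h₃⟩
    have hc_eq : ∫ z, c' z ∂π = ∫ z, c z ∂π := integral_congr_ae (hae.mono fun z hz => hc hz)
    have hf_eq : ∫ z, f' z.2 ∂π = ∫ z, f z.2 ∂π :=
      integral_congr_ae (hae.mono fun z hz => hf hz.2)
  · exact ⟨h₁, h₂, h₃, hc_eq ▸ h₄, hf_eq ▸ h₅⟩
  · exact ⟨h₁, h₂, h₃, hc_eq ▸ h₄, hf_eq ▸ h₅⟩

end Reduction

theorem stmt_19_general {d : ℕ} (S : Set (EuclideanSpace ℝ (Fin d))) (hS : IsCompact S)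
    (P : Measure (EuclideanSpace ℝ (Fin d))) [IsProbabilityMeasure P] (hP : P S = 1)
    (f : EuclideanSpace ℝ (Fin d) → ℝ) (hf : ContinuousOn f S)
    (c : EuclideanSpace ℝ (Fin d) × EuclideanSpace ℝ (Fin d) → ℝ)
    (hc : ContinuousOn c (S ×ˢ S))
    (hc_diag : ∀ x ∈ S, c (x, x) = 0)
    (ρ : ℝ) (hρ : 0 < ρ) :
    sSup {r : ℝ | ∃ π : Measure (EuclideanSpace ℝ (Fin d) × EuclideanSpace ℝ (Fin d)),
        IsProbabilityMeasure π ∧ π (S ×ˢ S) = 1 ∧ π.fst = P ∧ (∫ z, c z ∂π) ≤ ρ ∧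
        r = ∫ z, f z.2 ∂π}
      = sInf {r : ℝ | ∃ lam : ℝ, 0 ≤ lam ∧
          r = lam * ρ + ∫ x, sSup ((fun y => f y - lam * c (x, y)) '' S) ∂P} ∧
    (∃ π : Measure (EuclideanSpace ℝ (Fin d) × EuclideanSpace ℝ (Fin d)),
        IsProbabilityMeasure π ∧ π (S ×ˢ S) = 1 ∧ π.fst = P ∧ (∫ z, c z ∂π) ≤ ρ ∧
        (∫ z, f z.2 ∂π) =
          sSup {r : ℝ | ∃ π' : Measure (EuclideanSpace ℝ (Fin d) × EuclideanSpace ℝ (Fin d)),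
            IsProbabilityMeasure π' ∧ π' (S ×ˢ S) = 1 ∧ π'.fst = P ∧ (∫ z, c z ∂π') ≤ ρ ∧
            r = ∫ z, f z.2 ∂π'}) ∧
    (∃ lam : ℝ, 0 ≤ lam ∧
        lam * ρ + (∫ x, sSup ((fun y => f y - lam * c (x, y)) '' S) ∂P) =
          sInf {r : ℝ | ∃ lam' : ℝ, 0 ≤ lam' ∧
            r = lam' * ρ + ∫ x, sSup ((fun y => f y - lam' * c (x, y)) '' S) ∂P}) := by
  obtain ⟨f', hf', hff'⟩ := hS.isClosed.exists_continuous_eqOn hf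
  obtain ⟨c', hc', hcc'⟩ := (hS.prod hS).isClosed.exists_continuous_eqOn hc
  have hPS : ∀ᵐ x ∂P, x ∈ S := (mem_ae_iff_prob_eq_one hS.isClosed.measurableSet).2 hP
  obtain ⟨V, hG, hL⟩ := exists_isGreatest_primalValues_isLeast_image_dualObjective hS hP hf'
    hc' (fun x hx => (hcc' ⟨hx, hx⟩).trans (hc_diag x hx)) hρ
  rw [← setOf_eq_primalValues hS hff' hcc'] at hG
  rw [← setOf_eq_image_dualObjective hPS hff' hcc'] at hL
  obtain ⟨π, hπ, hπS, hπP, hcost, hπV⟩ := hG.1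
  obtain ⟨lam, hlam, hlamV⟩ := hL.1
  refine ⟨hG.csSup_eq.trans hL.csInf_eq.symm, ⟨π, hπ, hπS, hπP, hcost, ?_⟩, ⟨lam, hlam, ?_⟩⟩
  · rw [hG.csSup_eq, hπV]
  · rw [hL.csInf_eq, hlamV]

/-- Strong duality for unregularized WDRO on a compact set, with attainment:
`sup{E_{π₂} f : π ∈ Π_P, E_π c ≤ ρ} = inf_{λ≥0} λρ + E_{x∼P}[sup_{y∈S}(f(y) − λc(x,y))]`,
and both the primal supremum and the dual infimum are attained. -/
theorem stmt_19 {d : ℕ} (S : Set (EuclideanSpace ℝ (Fin d))) (hS : IsCompact S)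
    (P : Measure (EuclideanSpace ℝ (Fin d))) [IsProbabilityMeasure P] (hP : P S = 1)
    (f : EuclideanSpace ℝ (Fin d) → ℝ) (hf : ContinuousOn f S)
    (c : EuclideanSpace ℝ (Fin d) × EuclideanSpace ℝ (Fin d) → ℝ)
    (hc : ContinuousOn c (S ×ˢ S)) (hc_nonneg : ∀ z ∈ S ×ˢ S, 0 ≤ c z)
    (hc_diag : ∀ x ∈ S, c (x, x) = 0)
    (ρ : ℝ) (hρ : 0 < ρ) :
    sSup {r : ℝ | ∃ π : Measure (EuclideanSpace ℝ (Fin d) × EuclideanSpace ℝ (Fin d)),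
        IsProbabilityMeasure π ∧ π (S ×ˢ S) = 1 ∧ π.fst = P ∧ (∫ z, c z ∂π) ≤ ρ ∧
        r = ∫ z, f z.2 ∂π}
      = sInf {r : ℝ | ∃ lam : ℝ, 0 ≤ lam ∧
          r = lam * ρ + ∫ x, sSup ((fun y => f y - lam * c (x, y)) '' S) ∂P} ∧
    (∃ π : Measure (EuclideanSpace ℝ (Fin d) × EuclideanSpace ℝ (Fin d)),
        IsProbabilityMeasure π ∧ π (S ×ˢ S) = 1 ∧ π.fst = P ∧ (∫ z, c z ∂π) ≤ ρ ∧
        (∫ z, f z.2 ∂π) =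
          sSup {r : ℝ | ∃ π' : Measure (EuclideanSpace ℝ (Fin d) × EuclideanSpace ℝ (Fin d)),
            IsProbabilityMeasure π' ∧ π' (S ×ˢ S) = 1 ∧ π'.fst = P ∧ (∫ z, c z ∂π') ≤ ρ ∧
            r = ∫ z, f z.2 ∂π'}) ∧
    (∃ lam : ℝ, 0 ≤ lam ∧
        lam * ρ + (∫ x, sSup ((fun y => f y - lam * c (x, y)) '' S) ∂P) =
          sInf {r : ℝ | ∃ lam' : ℝ, 0 ≤ lam' ∧
            r = lam' * ρ + ∫ x, sSup ((fun y => f y - lam' * c (x, y)) '' S) ∂P}) :=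
  stmt_19_general S hS P hP f hf c hc hc_diag ρ hρ
end
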